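/- arXiv:2011.13412 — 7 statements merged into one kernel-verified Lean document; each statement's English description precedes it below -/
import Mathlib

section
/- Let N > 2, γ > 0, and let B = B(0,1) ⊂ ℝ^N be the open unit ball. Define u(x) = |x|^{−γ} − |x|^2, b(x) = γ x/|x|^2 for x ≠ 0. Then: (i) ∇u(x) + b(x)u(x) = −(2+γ)x for every x ∈ B ∖ {0}; (ii) u = 0 on ∂B and u is unbounded on B (it tends to +∞ as x → 0); (iii) the weak-L^N norm of |b| on B satisfies ‖|b|‖_{L^{N,∞}(B)} = γ ω_N^{1/N}, where ω_N is the Lebesgue measure of the unit ball of ℝ^N. In particular, the weak-L^N norm of the coefficient b can be made arbitrarily small by taking γ small, while the corresponding solution u stays unbounded. -/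
open MeasureTheory Real Set Filter Topology
open scoped ENNReal NNReal BigOperators

noncomputable section

abbrev Rn (N : ℕ) := EuclideanSpace ℝ (Fin N)

/-- The distribution function `μ_v(t) = |{x ∈ Ω : |v x| > t}|`. -/
noncomputable def distrib {N : ℕ} (Ω : Set (Rn N)) (v : Rn N → ℝ) (t : ℝ) : ℝ≥0∞ :=
  volume {x ∈ Ω | t < |v x|}

/-- The decreasing rearrangement `v*(s) = sup {t ≥ 0 : μ_v(t) ≥ s}`. -/
noncomputable def decRearr {N : ℕ} (Ω : Set (Rn N)) (v : Rn N → ℝ) (s : ℝ) : ℝ≥0∞ :=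
  sSup (ENNReal.ofReal '' {t : ℝ | 0 ≤ t ∧ ENNReal.ofReal s ≤ distrib Ω v t})

/-- The Marcinkiewicz (weak `L^p`, i.e. `L^{p,∞}`) quasinorm. -/
noncomputable def weakNorm {N : ℕ} (Ω : Set (Rn N)) (v : Rn N → ℝ) (p : ℝ) : ℝ≥0∞ :=
  ⨆ (t : ℝ) (_ : 0 < t ∧ ENNReal.ofReal t < volume Ω),
    ENNReal.ofReal t ^ (1 / p) * decRearr Ω v t

/-!
With `r = ‖x‖` one has `∇ r^p = p r^(p-2) x`, so `∇u = -(γ r^(-γ-2) + 2) x`, while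
`u b = γ (r^(-γ-2) - 1) x`: the `r^(-γ-2)` terms cancel in `∇u + u b`.

Since `|b| = γ / r`, the level set `{|b| > t}` of `B(0,R)` is, up to the origin, the ball of radius
`min R (γ/t)`. Hence, for `0 < s ≤ |B(0,R)|`, `s ≤ μ(t)` exactly when `t ≤ γ (ω_N / s)^(1/N)`, so
this is `b*(s)`, and `s^(1/N) b*(s) = γ ω_N^(1/N)` does not depend on `s`.
-/

section NormRpow
variable {E : Type*} [NormedAddCommGroup E] [InnerProductSpace ℝ E]

theorem hasFDerivAt_norm_rpow_of_ne_zero {x : E} (hx : x ≠ 0) (p : ℝ) :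
    HasFDerivAt (fun y : E ↦ ‖y‖ ^ p) ((p * ‖x‖ ^ (p - 2)) • innerSL ℝ x) x := by
  convert (hasStrictFDerivAt_norm_sq x).hasFDerivAt.rpow_const (p := p / 2)
    (Or.inl (by simpa using hx)) using 1
  · ext y
    rw [← rpow_natCast, ← rpow_mul (norm_nonneg y)]
    ring_nf
  · rw [← rpow_natCast, ← rpow_mul (norm_nonneg x), ← Nat.cast_smul_eq_nsmul ℝ, smul_smul]
    ring_nf

theorem hasGradientAt_norm_rpow_sub_norm_sq [CompleteSpace E] {x : E} (hx : x ≠ 0) (γ : ℝ) :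
    HasGradientAt (fun y : E ↦ ‖y‖ ^ (-γ) - ‖y‖ ^ (2 : ℝ))
      ((-γ * ‖x‖ ^ (-γ - 2) - 2) • x) x := by
  rw [hasGradientAt_iff_hasFDerivAt]
  refine ((hasFDerivAt_norm_rpow_of_ne_zero hx (-γ)).sub
    (hasFDerivAt_norm_rpow_of_ne_zero hx 2)).congr_fderiv ?_
  ext y
  simp [sub_smul]

theorem exists_hasGradientAt_add_smul_eq [CompleteSpace E] (γ : ℝ) {x : E} (hx : x ≠ 0) :
    ∃ g, HasGradientAt (fun y : E ↦ ‖y‖ ^ (-γ) - ‖y‖ ^ (2 : ℝ)) g x ∧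
      g + (‖x‖ ^ (-γ) - ‖x‖ ^ (2 : ℝ)) • (γ / ‖x‖ ^ (2 : ℝ)) • x = (-(2 + γ)) • x := by
  refine ⟨_, hasGradientAt_norm_rpow_sub_norm_sq hx γ, ?_⟩
  rw [smul_smul, ← add_smul, rpow_sub (norm_pos_iff.2 hx), rpow_two]
  congr 1
  field_simp
  ring

end NormRpow

theorem not_bddAbove_image_of_tendsto_nhdsNE {X β : Type*} [TopologicalSpace X] [Preorder β]
    [NoMaxOrder β] {a : X} [(𝓝[≠] a).NeBot] {f : X → β} {s : Set X} (hs : s ∈ 𝓝 a)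
    (hf : Tendsto f (𝓝[≠] a) atTop) : ¬BddAbove (f '' s) := by
  rintro ⟨M, hM⟩
  obtain ⟨x, hxM, hxs⟩ := ((hf.eventually_gt_atTop M).and (mem_nhdsWithin_of_mem_nhds hs)).exists
  exact (hM (mem_image_of_mem f hxs)).not_gt hxM

theorem tendsto_norm_rpow_neg_sub_norm_rpow {E : Type*} [NormedAddGroup E] {γ p : ℝ}
    (hγ : 0 < γ) (hp : 0 < p) : Tendsto (fun x : E ↦ ‖x‖ ^ (-γ) - ‖x‖ ^ p) (𝓝[≠] 0) atTop := by
  have hpow : Tendsto (fun x : E ↦ ‖x‖ ^ p) (𝓝[≠] 0) (𝓝 0) := by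
    refine Tendsto.mono_left ?_ nhdsWithin_le_nhds
    simpa [hp.ne'] using (continuous_norm.rpow_const fun _ ↦ Or.inr hp.le).tendsto (0 : E)
  simpa [sub_eq_add_neg] using
    ((tendsto_rpow_neg_nhdsGT_zero (neg_neg_of_pos hγ)).comp tendsto_norm_nhdsNE_zero).atTop_add
      hpow.neg

theorem norm_div_norm_rpow_two_smul {E : Type*} [NormedAddCommGroup E] [NormedSpace ℝ E]
    {γ : ℝ} (hγ : 0 ≤ γ) (x : E) : ‖(γ / ‖x‖ ^ (2 : ℝ)) • x‖ = γ / ‖x‖ := by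
  rcases eq_or_ne x 0 with rfl | hx
  · simp
  rw [norm_smul, norm_div, norm_of_nonneg hγ, rpow_two, norm_pow, norm_norm]
  field_simp [norm_ne_zero_iff.2 hx]

section Rearrangement
variable {N : ℕ} {Ω : Set (Rn N)} {v : Rn N → ℝ}

theorem distrib_antitone : Antitone (distrib Ω v) :=
  fun _ _ hst ↦ measure_mono fun _ hx ↦ ⟨hx.1, hst.trans_lt hx.2⟩

theorem decRearr_eq_ofReal {s T : ℝ} (hT : 0 < T)
    (h : ∀ t, 0 < t → (ENNReal.ofReal s ≤ distrib Ω v t ↔ t ≤ T)) :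
    decRearr Ω v s = ENNReal.ofReal T := by
  have hlevel : {t : ℝ | 0 ≤ t ∧ ENNReal.ofReal s ≤ distrib Ω v t} = Icc 0 T := by
    ext t
    refine and_congr_right fun ht ↦ ?_
    rcases ht.eq_or_lt with rfl | ht
    · exact iff_of_true (((h T hT).2 le_rfl).trans (distrib_antitone hT.le)) hT.le
    · exact h t ht
  rw [decRearr, hlevel]
  exact IsGreatest.csSup_eq ⟨mem_image_of_mem _ ⟨hT.le, le_rfl⟩,
    forall_mem_image.2 fun t ht ↦ ENNReal.ofReal_le_ofReal ht.2⟩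

theorem weakNorm_eq_of_forall_eq {p : ℝ} {c : ℝ≥0∞} (hΩ : volume Ω ≠ 0)
    (h : ∀ t, 0 < t → ENNReal.ofReal t < volume Ω →
      ENNReal.ofReal t ^ (1 / p) * decRearr Ω v t = c) :
    weakNorm Ω v p = c := by
  obtain ⟨t, -, ht0, htΩ⟩ := ENNReal.lt_iff_exists_real_btwn.1 (pos_iff_ne_zero.2 hΩ)
  have ht : 0 < t := ENNReal.ofReal_pos.1 ht0
  exact le_antisymm (iSup₂_le fun t ht ↦ (h t ht.1 ht.2).le)
    (le_iSup₂_of_le t ⟨ht, htΩ⟩ (h t ht htΩ).ge)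

end Rearrangement

theorem le_div_pow_mul_iff {N : ℕ} (hN : N ≠ 0) {s t γ ω : ℝ} (hs : 0 < s) (ht : 0 < t)
    (hγ : 0 < γ) (hω : 0 < ω) :
    s ≤ (γ / t) ^ N * ω ↔ t ≤ γ * (ω / s) ^ (1 / (N : ℝ)) := by
  rw [← div_le_iff₀' hγ, one_div, le_rpow_inv_iff_of_pos (by positivity) (by positivity)
    (by positivity), rpow_natCast, le_div_iff₀ hs, ← le_div_iff₀' (by positivity), div_pow,
    div_pow, div_div_eq_mul_div, div_mul_eq_mul_div, mul_comm ω]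

section InvNorm
variable {N : ℕ} [NeZero N] {γ R : ℝ} {v : Rn N → ℝ}

theorem distrib_ball_eq_volume_ball_min (hγ : 0 ≤ γ) (hv : ∀ x, x ≠ 0 → v x = γ / ‖x‖)
    {t : ℝ} (ht : 0 < t) :
    distrib (Metric.ball 0 R) v t = volume (Metric.ball (0 : Rn N) (min R (γ / t))) := by
  have hlevel : {x ∈ Metric.ball 0 R | t < |v x|} \ {0} =
      Metric.ball (0 : Rn N) (min R (γ / t)) \ {0} := by
    ext x
    rcases eq_or_ne x 0 with rfl | hx
    · simp
    have hx' : 0 < ‖x‖ := norm_pos_iff.2 hx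
    have hlt : t < |v x| ↔ ‖x‖ < γ / t := by
      rw [hv x hx, abs_of_nonneg (by positivity), lt_div_iff₀ hx', lt_div_iff₀ ht, mul_comm]
    simp [hx, hlt]
  rw [distrib, ← measure_sdiff_null (measure_singleton 0), hlevel,
    measure_sdiff_null (measure_singleton 0)]

theorem decRearr_ball_eq (hγ : 0 < γ) (hv : ∀ x, x ≠ 0 → v x = γ / ‖x‖) {s : ℝ} (hs : 0 < s)
    (hsR : ENNReal.ofReal s ≤ volume (Metric.ball (0 : Rn N) R)) :
    decRearr (Metric.ball 0 R) v s =
      ENNReal.ofReal (γ * ((volume (Metric.ball (0 : Rn N) 1)).toReal / s) ^ (1 / (N : ℝ))) := by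
  set ω := (volume (Metric.ball (0 : Rn N) 1)).toReal
  have hω : 0 < ω :=
    ENNReal.toReal_pos (Metric.measure_ball_pos _ _ one_pos).ne' measure_ball_lt_top.ne
  have hV : volume (Metric.ball (0 : Rn N) 1) = ENNReal.ofReal ω :=
    (ENNReal.ofReal_toReal measure_ball_lt_top.ne).symm
  have hmono : Monotone fun r ↦ volume (Metric.ball (0 : Rn N) r) :=
    fun _ _ h ↦ measure_mono (Metric.ball_subset_ball h)
  refine decRearr_eq_ofReal (by positivity) fun t ht ↦ ?_
  rw [distrib_ball_eq_volume_ball_min hγ.le hv ht, hmono.map_min, le_min_iff, and_iff_right hsR,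
    Measure.addHaar_ball _ _ (by positivity), finrank_euclideanSpace_fin,
    hV, ← ENNReal.ofReal_mul (by positivity),
    ENNReal.ofReal_le_ofReal_iff (by positivity)]
  exact le_div_pow_mul_iff (NeZero.ne N) hs ht hγ hω

theorem weakNorm_ball_eq (hγ : 0 < γ) (hv : ∀ x, x ≠ 0 → v x = γ / ‖x‖) (hR : 0 < R) :
    weakNorm (Metric.ball 0 R) v N =
      ENNReal.ofReal (γ * (volume (Metric.ball (0 : Rn N) 1)).toReal ^ (1 / (N : ℝ))) := by
  refine weakNorm_eq_of_forall_eq (Metric.measure_ball_pos _ _ hR).ne' fun t ht htR ↦ ?_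
  rw [decRearr_ball_eq hγ hv ht htR.le, ENNReal.ofReal_rpow_of_pos ht,
    ← ENNReal.ofReal_mul (by positivity), div_rpow ENNReal.toReal_nonneg ht.le,
    mul_div_assoc', mul_div_cancel₀ _ (by positivity)]

end InvNorm

/-- **Example 2.3**: an unbounded solution of a Dirichlet problem whose lower order
coefficient has arbitrarily small weak-`L^N` norm. -/
theorem unbounded_solution_small_weak_norm
    {N : ℕ} (hN : 2 < N) (γ : ℝ) (hγ : 0 < γ)
    (u : Rn N → ℝ) (hu : ∀ x : Rn N, u x = ‖x‖ ^ (-γ) - ‖x‖ ^ (2 : ℝ))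
    (b : Rn N → Rn N) (hb : ∀ x : Rn N, x ≠ 0 → b x = (γ / ‖x‖ ^ (2 : ℝ)) • x) :
    -- (i) `∇u(x) + b(x) u(x) = -(2+γ) x` on `B(0,1) \ {0}`
    (∀ x : Rn N, x ∈ Metric.ball (0 : Rn N) 1 → x ≠ 0 →
      ∃ gu : Rn N, HasGradientAt u gu x ∧ gu + u x • b x = (-(2 + γ)) • x) ∧
    -- (ii) `u = 0` on the boundary, `u → +∞` at the origin, `u` unbounded on the ball
    (∀ x : Rn N, ‖x‖ = 1 → u x = 0) ∧
    Tendsto u (𝓝[≠] (0 : Rn N)) atTop ∧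
    ¬ BddAbove (u '' Metric.ball (0 : Rn N) 1) ∧
    -- (iii) `‖ |b| ‖_{L^{N,∞}(B)} = γ ω_N^{1/N}`
    weakNorm (Metric.ball (0 : Rn N) 1) (fun x => ‖b x‖) (N : ℝ) =
      ENNReal.ofReal
        (γ * (volume (Metric.ball (0 : Rn N) 1)).toReal ^ (1 / (N : ℝ))) := by
  have : NeZero N := ⟨by omega⟩
  obtain rfl : u = fun x ↦ ‖x‖ ^ (-γ) - ‖x‖ ^ (2 : ℝ) := funext hu
  have hu_tendsto := tendsto_norm_rpow_neg_sub_norm_rpow (E := Rn N) hγ two_pos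
  refine ⟨fun x _ hx ↦ hb x hx ▸ exists_hasGradientAt_add_smul_eq γ hx, fun x hx ↦ by simp [hx],
    hu_tendsto, not_bddAbove_image_of_tendsto_nhdsNE (Metric.ball_mem_nhds 0 one_pos) hu_tendsto,
    weakNorm_ball_eq hγ (fun x hx ↦ ?_) one_pos⟩
  rw [hb x hx, norm_div_norm_rpow_two_smul hγ.le]
end
end

section
/- Let N ≥ 2. For every g_1,…,g_N ∈ C_c^∞(ℝ^N) one has ‖∏_{i=1}^N |g_i|^{1/N}‖_{L^{N/(N−1)}(ℝ^N)} ≤ ∏_{i=1}^N ‖∂_{x_i} g_i‖_{L^1(ℝ^N)}^{1/N}. -/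
open MeasureTheory Real Set Filter Topology
open scoped ENNReal NNReal BigOperators

noncomputable section

/-- The `i`-th partial derivative of `f : ℝ^N → ℝ`. -/
noncomputable def pd {N : ℕ} (i : Fin N) (f : Rn N → ℝ) (x : Rn N) : ℝ :=
  fderiv ℝ f x (EuclideanSpace.single i 1)

open Finset in
/-- Loomis–Whitney-type inequality for a family of functions, each independent of
its own coordinate. -/
theorem lw_aux {ι : Type*} [Fintype ι] [DecidableEq ι]
    {A : ι → Type*} [∀ i, MeasurableSpace (A i)] (μ : ∀ i, Measure (A i))
    [∀ i, SigmaFinite (μ i)] {p : ℝ} (hp₀ : 0 ≤ p)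
    (hp : ((Fintype.card ι : ℝ) - 1) * p = 1)
    (s : Finset ι) :
    ∀ F : ι → (∀ i, A i) → ℝ≥0∞, (∀ j, Measurable (F j)) →
      (∀ (j : ι) (x : ∀ i, A i) (t : A j), F j (Function.update x j t) = F j x) →
      ∫⋯∫⁻_s, (fun x => ∏ j, F j x ^ p) ∂μ ≤
        fun x => ∏ j, ((∫⋯∫⁻_(s.erase j), F j ∂μ) x) ^ p := by
  induction s using Finset.induction with
  | empty =>
    intro F hF _
    simp only [lmarginal_empty, Finset.erase_empty]
    exact le_rfl
  | @insert i s hi ih =>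
    intro F hF hFind
    have hcard : (1:ℕ) ≤ Fintype.card ι := Fintype.card_pos_iff.mpr ⟨i⟩
    have hmeas : Measurable fun x => ∏ j, F j x ^ p :=
      Finset.measurable_prod _ fun j _ => (hF j).pow_const p
    rw [lmarginal_insert' _ hmeas hi]
    set G : ι → (∀ i, A i) → ℝ≥0∞ :=
      fun j => if j = i then F i else ∫⋯∫⁻_{i}, F j ∂μ with hG
    have hGmeas : ∀ j, Measurable (G j) := by
      intro j
      by_cases h : j = i
      · simpa [hG, h] using hF i
      · simpa [hG, h] using (hF j).lmarginal μ
    have hGind : ∀ (j : ι) (x : ∀ i, A i) (t : A j),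
        G j (Function.update x j t) = G j x := by
      intro j x t
      by_cases h : j = i
      · subst h; simp [hG, hFind]
      · simp only [hG, if_neg h]
        rw [lmarginal_update_of_notMem (hF j) (by simp [h])]
        congr 1
        ext z
        simp [hFind]
    have key : (fun x => ∫⁻ t, (fun x => ∏ j, F j x ^ p) (Function.update x i t) ∂μ i) ≤
        fun x => ∏ j, G j x ^ p := by
      intro x
      simp only
      have h1 : ∀ t : A i, (∏ j, F j (Function.update x i t) ^ p)
          = F i x ^ p * ∏ j ∈ univ.erase i, F j (Function.update x i t) ^ p := by
        intro t
        rw [← Finset.mul_prod_erase univ _ (mem_univ i), hFind]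
      simp only [h1]
      have hmi : Measurable fun t : A i => ∏ j ∈ univ.erase i, F j (Function.update x i t) ^ p :=
        Finset.measurable_prod _ fun j _ => ((hF j).comp (measurable_update _)).pow_const p
      rw [lintegral_const_mul _ hmi]
      have holder : ∫⁻ t, ∏ j ∈ univ.erase i, F j (Function.update x i t) ^ p ∂μ i ≤
          ∏ j ∈ univ.erase i, (∫⁻ t, F j (Function.update x i t) ∂μ i) ^ p := by
        apply ENNReal.lintegral_prod_norm_pow_le
        · exact fun j _ => ((hF j).comp (measurable_update _)).aemeasurable
        · rw [Finset.sum_const, card_erase_of_mem (mem_univ i), card_univ, nsmul_eq_mul,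
            Nat.cast_sub hcard]
          simpa using hp
        · exact fun _ _ => hp₀
      calc F i x ^ p * ∫⁻ t, ∏ j ∈ univ.erase i, F j (Function.update x i t) ^ p ∂μ i
          ≤ F i x ^ p * ∏ j ∈ univ.erase i, (∫⁻ t, F j (Function.update x i t) ∂μ i) ^ p := by
            gcongr
        _ = ∏ j, G j x ^ p := by
            rw [← Finset.mul_prod_erase univ (fun j => G j x ^ p) (mem_univ i)]
            congr 1
            · simp [hG]
            · refine Finset.prod_congr rfl fun j hj => ?_
              have hji : j ≠ i := (Finset.mem_erase.mp hj).1
              simp [hG, hji, lmarginal_singleton]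
    refine le_trans (le_trans (lmarginal_mono key) (ih G hGmeas hGind)) (le_of_eq ?_)
    funext x
    refine Finset.prod_congr rfl fun j _ => ?_
    by_cases h : j = i
    · subst h
      simp [hG, Finset.erase_insert hi, Finset.erase_eq_of_notMem hi]
    · have h1 : (insert i s).erase j = (s.erase j) ∪ {i} := by
        rw [Finset.erase_insert_of_ne (Ne.symm h)]
        rw [Finset.insert_eq, Finset.union_comm]
      have h2 : Disjoint (s.erase j) ({i} : Finset ι) := by
        simp only [Finset.disjoint_singleton_right, Finset.mem_erase]
        exact fun h' => absurd h'.2 hi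
      simp only [hG, if_neg h]
      rw [← lmarginal_union μ (F j) (hF j) h2, ← h1]

/-- The core inequality on the concrete product space `Fin N → ℝ`. -/
theorem gagliardo_core {N : ℕ} (hN : 2 ≤ N) (u : Fin N → (Fin N → ℝ) → ℝ)
    (hu : ∀ i, ContDiff ℝ (⊤ : ℕ∞) (u i)) (hsupp : ∀ i, HasCompactSupport (u i)) :
    ∫⁻ y, ∏ i, (‖u i y‖₊ : ℝ≥0∞) ^ (1 / ((N:ℝ) - 1)) ≤
      ∏ i, (∫⁻ y, (‖fderiv ℝ (u i) y (Pi.single i 1)‖₊ : ℝ≥0∞)) ^ (1 / ((N:ℝ) - 1)) := by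
  classical
  have hn : (2:ℝ) ≤ (N:ℝ) := by exact_mod_cast hN
  have hn1 : (0:ℝ) < (N:ℝ) - 1 := by linarith
  set p : ℝ := 1 / ((N:ℝ) - 1) with hpdef
  have hp₀ : 0 ≤ p := by positivity
  have hp1 : ((N:ℝ) - 1) * p = 1 := by
    rw [hpdef]; field_simp
  set μ : Fin N → Measure ℝ := fun _ => volume with hμ
  set D : Fin N → (Fin N → ℝ) → ℝ≥0∞ :=
    fun i y => (‖fderiv ℝ (u i) y (Pi.single i 1)‖₊ : ℝ≥0∞) with hD
  have hDmeas : ∀ i, Measurable (D i) := by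
    intro i
    have hc : Continuous (fderiv ℝ (u i)) := (hu i).continuous_fderiv (by simp)
    exact (hc.clm_apply continuous_const).measurable.enorm
  set F : Fin N → (Fin N → ℝ) → ℝ≥0∞ := fun i => ∫⋯∫⁻_{i}, D i ∂μ with hF
  have hFmeas : ∀ i, Measurable (F i) := fun i => (hDmeas i).lmarginal μ
  have hFind : ∀ (i : Fin N) (y : Fin N → ℝ) (t : ℝ),
      F i (Function.update y i t) = F i y := by
    intro i y t
    rw [hF]
    exact lmarginal_update_of_mem μ (Finset.mem_singleton_self i) (D i) y t
  have hpt : ∀ (i : Fin N) (y : Fin N → ℝ), (‖u i y‖₊ : ℝ≥0∞) ≤ F i y := by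
    intro i y
    have h1 : ContDiff ℝ 1 (u i ∘ Function.update y i) :=
      ((hu i).of_le (by simp)).comp (by convert contDiff_update 1 y i)
    have h2 : HasCompactSupport (u i ∘ Function.update y i) :=
      (hsupp i).comp_isClosedEmbedding (isClosedEmbedding_update y i)
    calc (‖u i y‖₊ : ℝ≥0∞)
        ≤ ∫⁻ t in Iic (y i), ‖deriv (u i ∘ Function.update y i) t‖₊ :=
          le_trans (by simp) (HasCompactSupport.enorm_le_lintegral_Ici_deriv h1 h2 (y i))
      _ ≤ ∫⁻ t in Iic (y i), D i (Function.update y i t) := by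
          refine lintegral_mono fun t => le_of_eq ?_
          have : deriv (u i ∘ Function.update y i) t
              = fderiv ℝ (u i) (Function.update y i t) (deriv (Function.update y i) t) := by
            rw [fderiv_comp_deriv _ ((hu i).differentiable (by simp)).differentiableAt
              (hasDerivAt_update y i t).differentiableAt]
          rw [this, deriv_update]
      _ ≤ ∫⁻ t, D i (Function.update y i t) :=
          lintegral_mono' Measure.restrict_le_self le_rfl
      _ = F i y := by
          rw [hF]; exact (congrFun (lmarginal_singleton (μ := μ) (D i) i) y).symm
  calc ∫⁻ y, ∏ i, (‖u i y‖₊ : ℝ≥0∞) ^ p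
      ≤ ∫⁻ y, ∏ i, (F i y) ^ p := by
        refine lintegral_mono fun y => Finset.prod_le_prod' fun i _ => ?_
        exact ENNReal.rpow_le_rpow (hpt i y) hp₀
    _ = (∫⋯∫⁻_Finset.univ, (fun y => ∏ i, F i y ^ p) ∂μ) 0 := by
        rw [lmarginal_univ, hμ, ← volume_pi]
    _ ≤ ∏ i, ((∫⋯∫⁻_(Finset.univ.erase i), F i ∂μ) 0) ^ p := by
        exact lw_aux μ hp₀ (by simpa using hp1) Finset.univ F hFmeas hFind 0
    _ = ∏ i, (∫⁻ y, D i y) ^ p := by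
        refine Finset.prod_congr rfl fun i _ => ?_
        have hdis : Disjoint (Finset.univ.erase i) ({i} : Finset (Fin N)) := by simp
        have hun : (Finset.univ.erase i) ∪ {i} = Finset.univ := by
          rw [Finset.union_comm, ← Finset.insert_eq]
          exact Finset.insert_erase (Finset.mem_univ i)
        rw [hF, ← lmarginal_union μ (D i) (hDmeas i) hdis, hun, lmarginal_univ, hμ, ← volume_pi]

/-- **Lemma 4.2 (Gagliardo–Troisi-type inequality for products):**
`‖∏ |gᵢ|^{1/N}‖_{L^{N/(N-1)}} ≤ ∏ ‖∂ᵢ gᵢ‖_{L^1}^{1/N}`. -/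
theorem product_gagliardo_inequality
    {N : ℕ} (hN : 2 ≤ N) (g : Fin N → Rn N → ℝ)
    (hg : ∀ i, ContDiff ℝ (⊤ : ℕ∞) (g i) ∧ HasCompactSupport (g i)) :
    eLpNorm (fun x : Rn N => ∏ i, |g i x| ^ (1 / (N : ℝ)))
        (ENNReal.ofReal ((N : ℝ) / ((N : ℝ) - 1))) volume ≤
      ∏ i, (eLpNorm (fun x : Rn N => pd i (g i) x) 1 volume) ^ (1 / (N : ℝ)) := by
  classical
  have hn : (2:ℝ) ≤ (N:ℝ) := by exact_mod_cast hN
  have hn1 : (0:ℝ) < (N:ℝ) - 1 := by linarith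
  have hn0 : (0:ℝ) < (N:ℝ) := by linarith
  set q : ℝ := (N:ℝ) / ((N:ℝ) - 1) with hqdef
  have hq0 : 0 < q := by positivity
  set p : ℝ := 1 / ((N:ℝ) - 1) with hpdef
  have hp₀ : 0 ≤ p := by positivity
  -- transfer to `Fin N → ℝ`
  set eL := EuclideanSpace.equiv (Fin N) ℝ with heL
  set u : Fin N → (Fin N → ℝ) → ℝ := fun i y => g i (eL.symm y) with hu
  have hucd : ∀ i, ContDiff ℝ (⊤ : ℕ∞) (u i) := fun i => (hg i).1.comp eL.symm.contDiff
  have husupp : ∀ i, HasCompactSupport (u i) := fun i =>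
    (hg i).2.comp_homeomorph eL.symm.toHomeomorph
  have hder : ∀ (i : Fin N) (y : Fin N → ℝ),
      fderiv ℝ (u i) y (Pi.single i 1) = pd i (g i) (eL.symm y) := by
    intro i y
    have h1 : u i = (g i) ∘ eL.symm := rfl
    rw [h1, eL.symm.comp_right_fderiv]
    rfl
  have hgmeas : ∀ i, Measurable (g i) := fun i => (hg i).1.continuous.measurable
  have hpdmeas : ∀ i, Measurable fun x : Rn N => (‖pd i (g i) x‖₊ : ℝ≥0∞) := by
    intro i
    have hc : Continuous (fderiv ℝ (g i)) := (hg i).1.continuous_fderiv (by simp)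
    exact (hc.clm_apply continuous_const).measurable.enorm
  have hvol := (EuclideanSpace.volume_preserving_symm_measurableEquiv_toLp (Fin N)).symm
  -- the core bound, transferred to `Rn N`
  have hB : ∫⁻ x : Rn N, ∏ i, (‖g i x‖₊ : ℝ≥0∞) ^ p ∂volume ≤
      ∏ i, (∫⁻ x : Rn N, (‖pd i (g i) x‖₊ : ℝ≥0∞) ∂volume) ^ p := by
    have h1 : ∫⁻ x : Rn N, ∏ i, (‖g i x‖₊ : ℝ≥0∞) ^ p ∂volume
        = ∫⁻ y, ∏ i, (‖u i y‖₊ : ℝ≥0∞) ^ p ∂volume := by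
      rw [← hvol.lintegral_comp
        (Finset.measurable_prod _ fun i _ => (hgmeas i).enorm.pow_const p :
          Measurable fun x : Rn N => ∏ i, (‖g i x‖₊ : ℝ≥0∞) ^ p)]
      rfl
    have h2 : ∀ i : Fin N, ∫⁻ x : Rn N, (‖pd i (g i) x‖₊ : ℝ≥0∞) ∂volume
        = ∫⁻ y, (‖fderiv ℝ (u i) y (Pi.single i 1)‖₊ : ℝ≥0∞) ∂volume := by
      intro i
      rw [← hvol.lintegral_comp (hpdmeas i)]
      refine lintegral_congr fun y => ?_
      rw [hder i y]
      rfl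
    rw [h1]
    refine le_trans (gagliardo_core hN u hucd husupp) (le_of_eq ?_)
    exact Finset.prod_congr rfl fun i _ => by rw [h2 i]
  -- eLpNorm bookkeeping
  have hofq0 : ENNReal.ofReal q ≠ 0 := (ENNReal.ofReal_pos.mpr hq0).ne'
  have hofqt : ENNReal.ofReal q ≠ ∞ := ENNReal.ofReal_ne_top
  rw [eLpNorm_eq_lintegral_rpow_enorm_toReal hofq0 hofqt, ENNReal.toReal_ofReal hq0.le]
  have hA : ∀ x : Rn N, (‖∏ i, |g i x| ^ (1 / (N:ℝ))‖ₑ) ^ q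
      = ∏ i, (‖g i x‖₊ : ℝ≥0∞) ^ p := by
    intro x
    rw [Real.enorm_eq_ofReal (Finset.prod_nonneg fun i _ => by positivity),
      ENNReal.ofReal_prod_of_nonneg (fun i _ => by positivity),
      ← ENNReal.prod_rpow_of_nonneg hq0.le]
    refine Finset.prod_congr rfl fun i _ => ?_
    rw [← ENNReal.ofReal_rpow_of_nonneg (abs_nonneg _) (by positivity),
      ← ENNReal.rpow_mul, ← Real.enorm_eq_ofReal_abs]
    congr 1
    rw [hqdef, hpdef]
    field_simp
  simp_rw [hA]
  calc (∫⁻ x : Rn N, ∏ i, (‖g i x‖₊ : ℝ≥0∞) ^ p ∂volume) ^ (1 / q)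
      ≤ (∏ i, (∫⁻ x : Rn N, (‖pd i (g i) x‖₊ : ℝ≥0∞) ∂volume) ^ p) ^ (1 / q) :=
        ENNReal.rpow_le_rpow hB (by positivity)
    _ = ∏ i, (∫⁻ x : Rn N, (‖pd i (g i) x‖₊ : ℝ≥0∞) ∂volume) ^ (1 / (N:ℝ)) := by
        rw [← ENNReal.prod_rpow_of_nonneg (by positivity)]
        refine Finset.prod_congr rfl fun i _ => ?_
        rw [← ENNReal.rpow_mul]
        congr 1
        rw [hpdef, hqdef]
        field_simp
    _ = ∏ i, (eLpNorm (fun x : Rn N => pd i (g i) x) 1 volume) ^ (1 / (N:ℝ)) := by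
        refine Finset.prod_congr rfl fun i _ => ?_
        rw [eLpNorm_one_eq_lintegral_enorm]; rfl

end
end

section
/- Let N ≥ 2 and let p_1,…,p_N ≥ 1 be such that p̄ < N, where 1/p̄ = (1/N)Σ_{i=1}^N 1/p_i, and set p̄* = Np̄/(N−p̄). Then there exists a constant C_1 > 0, independent of u, such that ‖u‖_{L^{p̄*}(ℝ^N)} ≤ C_1 ∏_{i=1}^N ‖∂_{x_i} u‖_{L^{p_i}(ℝ^N)}^{1/N} for every u ∈ C_c^∞(ℝ^N). -/
open MeasureTheory Real Set Filter Topology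
open scoped ENNReal NNReal BigOperators

noncomputable section

section AuxLW
open Function


open Finset in
theorem loomis_whitney_step {ι : Type*} [Fintype ι] [DecidableEq ι]
    {A : ι → Type*} [∀ i, MeasurableSpace (A i)] (μ : ∀ i, Measure (A i))
    [∀ i, SigmaFinite (μ i)]
    (g : ι → (∀ i, A i) → ℝ≥0∞) (hg : ∀ i, Measurable (g i))
    (hgi : ∀ (i : ι) (x : ∀ j, A j) (t : A i), g i (Function.update x i t) = g i x)
    {q : ℝ} (hq : 0 ≤ q) (hq1 : ((Fintype.card ι : ℝ) - 1) * q = 1)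
    (s : Finset ι) :
    ∀ x, (∫⋯∫⁻_s, (fun y => ∏ i, g i y ^ q) ∂μ) x ≤
      (∏ i ∈ s, ((∫⋯∫⁻_(s.erase i), g i ∂μ) x) ^ q) *
      ∏ i ∈ sᶜ, ((∫⋯∫⁻_s, g i ∂μ) x) ^ q := by
  have hprodmeas : Measurable (fun y => ∏ i, g i y ^ q) :=
    Finset.measurable_prod _ fun i _ => (hg i).pow_const _
  induction s using Finset.induction with
  | empty =>
    intro x
    simp only [lmarginal_empty, Finset.prod_empty, one_mul, Finset.compl_empty]
    exact le_rfl
  | @insert j s hj ih =>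
    intro x
    have hcard : 1 ≤ Fintype.card ι := Fintype.card_pos_iff.mpr ⟨j⟩
    have hGmeas : ∀ (t : Finset ι) i, Measurable (∫⋯∫⁻_t, g i ∂μ) := fun t i => (hg i).lmarginal μ
    have hconst : ∀ t : A j, (∫⋯∫⁻_s, g j ∂μ) (Function.update x j t) = (∫⋯∫⁻_s, g j ∂μ) x := by
      intro t
      rw [lmarginal_update_of_notMem (hg j) hj]
      congr 1
      ext y
      exact hgi j y t
    set H : ι → A j → ℝ≥0∞ := fun i t =>
      if i ∈ s then (∫⋯∫⁻_(s.erase i), g i ∂μ) (Function.update x j t)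
      else (∫⋯∫⁻_s, g i ∂μ) (Function.update x j t) with hH
    have hHmeas : ∀ i, Measurable (H i) := by
      intro i
      by_cases his : i ∈ s <;>
        simp only [hH, his, if_true, if_false] <;>
        exact (hGmeas _ i).comp (measurable_update x)
    have hsplit : s ∪ sᶜ.erase j = Finset.univ.erase j := by
      ext k
      simp only [Finset.mem_union, Finset.mem_erase, Finset.mem_compl, Finset.mem_univ,
        and_true]
      constructor
      · rintro (hk | ⟨hkj, _⟩)
        · rintro rfl; exact hj hk
        · exact hkj
      · intro hk
        by_cases hks : k ∈ s
        · exact Or.inl hks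
        · exact Or.inr ⟨hk, hks⟩
    have hdisj : Disjoint s (sᶜ.erase j) :=
      Finset.disjoint_left.mpr fun k hk hk' => (Finset.mem_compl.mp (Finset.mem_of_mem_erase hk')) hk
    have hjc : j ∈ sᶜ := Finset.mem_compl.mpr hj
    calc (∫⋯∫⁻_insert j s, (fun y => ∏ i, g i y ^ q) ∂μ) x
        = ∫⁻ t, (∫⋯∫⁻_s, (fun y => ∏ i, g i y ^ q) ∂μ) (Function.update x j t) ∂μ j :=
          lmarginal_insert _ hprodmeas hj x
      _ ≤ ∫⁻ t, ((∏ i ∈ s, ((∫⋯∫⁻_(s.erase i), g i ∂μ) (Function.update x j t)) ^ q) *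
            ∏ i ∈ sᶜ, ((∫⋯∫⁻_s, g i ∂μ) (Function.update x j t)) ^ q) ∂μ j :=
          lintegral_mono fun t => ih _
      _ = ∫⁻ t, ((∫⋯∫⁻_s, g j ∂μ) x) ^ q * ∏ i ∈ Finset.univ.erase j, (H i t) ^ q ∂μ j := by
          congr 1; ext t
          rw [← hsplit, Finset.prod_union hdisj]
          rw [← Finset.mul_prod_erase sᶜ _ hjc, hconst t]
          have h1 : ∏ i ∈ s, ((∫⋯∫⁻_(s.erase i), g i ∂μ) (Function.update x j t)) ^ q
              = ∏ i ∈ s, (H i t) ^ q :=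
            Finset.prod_congr rfl fun i hi => by simp only [hH, hi, if_true]
          have h2 : ∏ i ∈ sᶜ.erase j, ((∫⋯∫⁻_s, g i ∂μ) (Function.update x j t)) ^ q
              = ∏ i ∈ sᶜ.erase j, (H i t) ^ q := by
            refine Finset.prod_congr rfl fun i hi => ?_
            have his : i ∉ s := Finset.mem_compl.mp (Finset.mem_of_mem_erase hi)
            simp only [hH, his, if_false]
          rw [h1, h2]
          ring
      _ = ((∫⋯∫⁻_s, g j ∂μ) x) ^ q * ∫⁻ t, ∏ i ∈ Finset.univ.erase j, (H i t) ^ q ∂μ j := by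
          rw [lintegral_const_mul]
          exact Finset.measurable_prod _ fun i _ => (hHmeas i).pow_const _
      _ ≤ ((∫⋯∫⁻_s, g j ∂μ) x) ^ q *
            ∏ i ∈ Finset.univ.erase j, (∫⁻ t, H i t ∂μ j) ^ q := by
          gcongr
          refine ENNReal.lintegral_prod_norm_pow_le _ (fun i _ => (hHmeas i).aemeasurable) ?_
            (fun i _ => hq)
          rw [Finset.sum_const, Finset.card_erase_of_mem (Finset.mem_univ j),
            Finset.card_univ, nsmul_eq_mul, Nat.cast_sub hcard, Nat.cast_one, hq1]
      _ = (∏ i ∈ insert j s, ((∫⋯∫⁻_((insert j s).erase i), g i ∂μ) x) ^ q) *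
            ∏ i ∈ (insert j s)ᶜ, ((∫⋯∫⁻_(insert j s), g i ∂μ) x) ^ q := by
          rw [Finset.prod_insert hj, Finset.compl_insert, Finset.erase_insert hj]
          have key : ∀ i, i ≠ j → (∫⁻ t, H i t ∂μ j) =
              if i ∈ s then ((∫⋯∫⁻_((insert j s).erase i), g i ∂μ) x)
              else ((∫⋯∫⁻_(insert j s), g i ∂μ) x) := by
            intro i hij
            by_cases his : i ∈ s
            · have hre : (insert j s).erase i = insert j (s.erase i) := by
                rw [Finset.erase_insert_of_ne hij.symm]
              rw [if_pos his, hre]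
              simp only [hH, his, if_true]
              rw [lmarginal_insert _ (hg i) (fun h => hj (Finset.mem_of_mem_erase h))]
            · rw [if_neg his]
              simp only [hH, his, if_false]
              rw [lmarginal_insert _ (hg i) hj]
          have e1 : ∏ i ∈ s, (∫⁻ t, H i t ∂μ j) ^ q
              = ∏ i ∈ s, ((∫⋯∫⁻_((insert j s).erase i), g i ∂μ) x) ^ q := by
            refine Finset.prod_congr rfl fun i hi => ?_
            rw [key i (fun h => hj (h ▸ hi)), if_pos hi]
          have e2 : ∏ i ∈ sᶜ.erase j, (∫⁻ t, H i t ∂μ j) ^ q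
              = ∏ i ∈ sᶜ.erase j, ((∫⋯∫⁻_(insert j s), g i ∂μ) x) ^ q := by
            refine Finset.prod_congr rfl fun i hi => ?_
            have his : i ∉ s := Finset.mem_compl.mp (Finset.mem_of_mem_erase hi)
            rw [key i (Finset.mem_erase.mp hi).1, if_neg his]
          rw [← hsplit, Finset.prod_union hdisj, e1, e2]
          ring

open Finset in
theorem loomis_whitney {ι : Type*} [Fintype ι] [DecidableEq ι]
    {A : ι → Type*} [∀ i, MeasurableSpace (A i)] (μ : ∀ i, Measure (A i))
    [∀ i, SigmaFinite (μ i)]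
    (F : ι → (∀ i, A i) → ℝ≥0∞) (hF : ∀ i, Measurable (F i))
    {q : ℝ} (hq : 0 ≤ q) (hq1 : ((Fintype.card ι : ℝ) - 1) * q = 1) (x : ∀ i, A i) :
    ∫⁻ y, ∏ i, (∫⁻ t, F i (Function.update y i t) ∂μ i) ^ q ∂Measure.pi μ ≤
      ∏ i, (∫⁻ y, F i y ∂Measure.pi μ) ^ q := by
  set g : ι → (∀ i, A i) → ℝ≥0∞ := fun i => ∫⋯∫⁻_{i}, F i ∂μ with hg
  have hgm : ∀ i, Measurable (g i) := fun i => (hF i).lmarginal μ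
  have hgi : ∀ (i : ι) (y : ∀ j, A j) (t : A i), g i (Function.update y i t) = g i y :=
    fun i y t => lmarginal_update_of_mem (μ := μ) (s := {i}) (Finset.mem_singleton_self i) (F i) y t
  have h := loomis_whitney_step μ g hgm hgi hq hq1 Finset.univ x
  simp only [lmarginal_univ, Finset.compl_univ, Finset.prod_empty, mul_one] at h
  have hsing : ∀ i, (fun y => ∫⁻ t, F i (Function.update y i t) ∂μ i) = g i := by
    intro i
    rw [hg]
    exact (lmarginal_singleton (F i) i).symm
  calc ∫⁻ y, ∏ i, (∫⁻ t, F i (Function.update y i t) ∂μ i) ^ q ∂Measure.pi μ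
      = ∫⁻ y, ∏ i, g i y ^ q ∂Measure.pi μ := by
        congr 1; ext y
        exact Finset.prod_congr rfl fun i _ => by rw [← hsing i]
    _ ≤ ∏ i, ((∫⋯∫⁻_(Finset.univ.erase i), g i ∂μ) x) ^ q := h
    _ = ∏ i, (∫⁻ y, F i y ∂Measure.pi μ) ^ q := by
        refine Finset.prod_congr rfl fun i _ => ?_
        congr 1
        rw [hg]
        have : ({i} : Finset ι) ∪ Finset.univ.erase i = Finset.univ := by
          ext k
          simp only [Finset.mem_union, Finset.mem_singleton, Finset.mem_erase, Finset.mem_univ,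
            and_true, iff_true]
          by_cases h : k = i
          · exact Or.inl h
          · exact Or.inr h
        rw [← lmarginal_union' μ (F i) (hF i)
          (by simp [Finset.disjoint_left]), this, lmarginal_univ]
      -- disjoint {i} (univ.erase i)


end AuxLW

private lemma rpow_sum_helper {ι : Type*} (a : ℝ≥0∞) (s : Finset ι) (c : ι → ℝ)
    (hc : ∀ i, 0 ≤ c i) : a ^ (∑ i ∈ s, c i) = ∏ i ∈ s, a ^ c i := by
  classical
  induction s using Finset.induction with
  | empty => simp
  | @insert j s hj ih =>
    rw [Finset.sum_insert hj, Finset.prod_insert hj,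
      ENNReal.rpow_add_of_nonneg _ _ (hc j) (Finset.sum_nonneg fun i _ => hc i), ih]

/-- **Troisi's anisotropic Sobolev inequality** (case `p̄ < N`):
`‖u‖_{L^{p̄*}} ≤ C₁ ∏ ‖∂ᵢ u‖_{L^{pᵢ}}^{1/N}`. -/
theorem troisi_anisotropic_sobolev
    {N : ℕ} (hN : 2 ≤ N)
    (p : Fin N → ℝ) (hp : ∀ i, 1 ≤ p i)
    (pbar : ℝ) (hpbar : 1 / pbar = (1 / (N : ℝ)) * ∑ i, 1 / p i)
    (hpbarN : pbar < N) :
    ∃ C₁ : ℝ, 0 < C₁ ∧ ∀ u : Rn N → ℝ,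
      ContDiff ℝ (⊤ : ℕ∞) u → HasCompactSupport u →
      eLpNorm u (ENNReal.ofReal ((N : ℝ) * pbar / ((N : ℝ) - pbar))) volume ≤
        ENNReal.ofReal C₁ *
          ∏ i, (eLpNorm (fun x : Rn N => pd i u x) (ENNReal.ofReal (p i)) volume) ^
            (1 / (N : ℝ)) := by
  classical
  have hN1 : (1:ℝ) < (N:ℝ) := by
    have : (2:ℝ) ≤ (N:ℝ) := by exact_mod_cast hN
    linarith
  have hN0 : (0:ℝ) < (N:ℝ) := by linarith
  have hN1' : (0:ℝ) < (N:ℝ) - 1 := by linarith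
  have hp0 : ∀ i, (0:ℝ) < p i := fun i => lt_of_lt_of_le one_pos (hp i)
  haveI : Nonempty (Fin N) := ⟨⟨0, by omega⟩⟩
  have hsum_pos : 0 < ∑ i, 1 / p i :=
    Finset.sum_pos (fun i _ => one_div_pos.mpr (hp0 i)) Finset.univ_nonempty
  have hpbar_pos : (0:ℝ) < pbar := by
    have h1 : 0 < 1 / pbar := by rw [hpbar]; positivity
    exact (one_div_pos).mp h1
  have hNp : (0:ℝ) < (N:ℝ) - pbar := by linarith
  set ps : ℝ := (N : ℝ) * pbar / ((N : ℝ) - pbar) with hps_def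
  have hps_pos : 0 < ps := div_pos (mul_pos hN0 hpbar_pos) hNp
  set q : ℝ := 1 / ((N:ℝ) - 1) with hq_def
  have hq0' : 0 < q := one_div_pos.mpr hN1'
  have hq0 : 0 ≤ q := hq0'.le
  have hq1 : ((N:ℝ) - 1) * q = 1 := by rw [hq_def]; field_simp
  set t : Fin N → ℝ := fun i => 1 + ps * (1 - 1 / p i) with ht_def
  have ht1 : ∀ i, 1 ≤ t i := by
    intro i
    have h1 : 1 / p i ≤ 1 := by rw [div_le_one (hp0 i)]; exact hp i
    have h2 : 0 ≤ ps * (1 - 1 / p i) := mul_nonneg hps_pos.le (by linarith)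
    show (1:ℝ) ≤ 1 + ps * (1 - 1 / p i)
    linarith
  have ht0 : ∀ i, (0:ℝ) < t i := fun i => lt_of_lt_of_le one_pos (ht1 i)
  have hsum : ∑ i, 1 / p i = (N:ℝ) / pbar := by
    have h : (N:ℝ) * (1/pbar) = (N:ℝ) * ((1/(N:ℝ)) * ∑ i, 1/p i) := by rw [← hpbar]
    rw [mul_one_div, ← mul_assoc, mul_one_div, div_self hN0.ne', one_mul] at h
    exact h.symm
  have hS1 : ∑ i, (1 - 1 / p i) = (N:ℝ) - (N:ℝ) / pbar := by
    rw [Finset.sum_sub_distrib, Finset.sum_const, Finset.card_univ, Fintype.card_fin,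
      nsmul_eq_mul, mul_one, hsum]
  have hsumt : ∑ i, t i * q = ps := by
    have hsts : ∑ i, t i = ((N:ℝ) - 1) * ps := by
      simp only [ht_def]
      rw [Finset.sum_add_distrib, Finset.sum_const, Finset.card_univ, Fintype.card_fin,
        nsmul_eq_mul, mul_one, ← Finset.mul_sum, hS1, hps_def]
      field_simp
      ring
    rw [← Finset.sum_mul, hsts, mul_comm ((N:ℝ) - 1) ps, mul_assoc, hq1, mul_one]
  set b : ℝ := (∑ i, (1 - 1 / p i)) * q with hb_def
  have hbeq : b = ((N:ℝ) - (N:ℝ) / pbar) * q := by rw [hb_def, hS1]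
  have hb0 : 0 ≤ b := by
    rw [hbeq]
    have hpbar1 : 1 ≤ pbar := by
      have h2 : 1 / pbar ≤ 1 := by
        rw [hpbar]
        have hsle : ∑ i, 1 / p i ≤ (N:ℝ) := by
          calc ∑ i, 1 / p i ≤ ∑ _i : Fin N, (1:ℝ) :=
                Finset.sum_le_sum fun i _ => by rw [div_le_one (hp0 i)]; exact hp i
            _ = (N:ℝ) := by simp
        calc (1 / (N:ℝ)) * ∑ i, 1 / p i ≤ (1 / (N:ℝ)) * (N:ℝ) := by
              apply mul_le_mul_of_nonneg_left hsle; positivity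
          _ = 1 := by field_simp
      rw [div_le_one hpbar_pos] at h2
      exact h2
    have : (N:ℝ) / pbar ≤ (N:ℝ) := by
      rw [div_le_iff₀ hpbar_pos]
      nlinarith
    apply mul_nonneg _ hq0
    linarith
  have hb1 : b < 1 := by
    rw [hbeq, ← hq1]
    have h2 : (N:ℝ) - (N:ℝ)/pbar < (N:ℝ) - 1 := by
      have : 1 < (N:ℝ)/pbar := (one_lt_div hpbar_pos).mpr hpbarN
      linarith
    exact mul_lt_mul_of_pos_right h2 hq0'
  have h1b : (0:ℝ) < 1 - b := by linarith
  have h1bps : (1 - b) * (((N:ℝ) - 1)/(N:ℝ)) = 1 / ps := by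
    rw [hbeq, hps_def, hq_def]
    field_simp
    ring
  -- the constant
  refine ⟨∏ i, t i ^ (1 / (N:ℝ)), Finset.prod_pos fun i _ => Real.rpow_pos_of_pos (ht0 i) _, ?_⟩
  intro u hu h2u
  -- transfer to the pi space
  set w : (Fin N → ℝ) → ℝ := u ∘ ⇑(EuclideanSpace.equiv (Fin N) ℝ).symm with hw_def
  have hw : ContDiff ℝ 1 w := (hu.of_le (by simp)).comp (EuclideanSpace.equiv (Fin N) ℝ).symm.contDiff
  have h2w : HasCompactSupport w :=
    h2u.comp_homeomorph (EuclideanSpace.equiv (Fin N) ℝ).symm.toHomeomorph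
  have hD : ∀ (y : Fin N → ℝ) (i : Fin N),
      fderiv ℝ w y (Pi.single i 1) = pd i u ((EuclideanSpace.equiv (Fin N) ℝ).symm y) := by
    intro y i
    rw [hw_def, ContinuousLinearEquiv.comp_right_fderiv]
    rfl
  have mpE : MeasurePreserving (⇑(MeasurableEquiv.toLp 2 (Fin N → ℝ)))
      (volume : Measure (Fin N → ℝ)) (volume : Measure (Rn N)) :=
    (EuclideanSpace.volume_preserving_symm_measurableEquiv_toLp (Fin N)).symm
  -- continuity and measurability facts
  have hwc : Continuous w := hw.continuous
  have hfd : Continuous (fderiv ℝ w) := hw.continuous_fderiv one_ne_zero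
  have hfdi : ∀ i, Continuous fun y => fderiv ℝ w y (Pi.single i 1) :=
    fun i => hfd.clm_apply continuous_const
  have hmw : ∀ (r : ℝ), Measurable fun y => (‖w y‖₊ : ℝ≥0∞) ^ r :=
    fun r => (hwc.measurable.nnnorm.coe_nnreal_ennreal).pow_const _
  have hmd : ∀ i, Measurable fun y => (‖fderiv ℝ w y (Pi.single i 1)‖₊ : ℝ≥0∞) :=
    fun i => (hfdi i).measurable.nnnorm.coe_nnreal_ennreal
  set I : ℝ≥0∞ := ∫⁻ y, (‖w y‖₊ : ℝ≥0∞) ^ ps ∂(volume : Measure (Fin N → ℝ)) with hI_def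
  set F : Fin N → (Fin N → ℝ) → ℝ≥0∞ := fun i y =>
    ENNReal.ofReal (t i) * (‖w y‖₊ : ℝ≥0∞) ^ (t i - 1) *
      (‖fderiv ℝ w y (Pi.single i 1)‖₊ : ℝ≥0∞) with hF_def
  have hF : ∀ i, Measurable (F i) :=
    fun i => ((measurable_const.mul (hmw _)).mul (hmd i))
  set Ni : Fin N → ℝ≥0∞ := fun i =>
    (∫⁻ y, (‖fderiv ℝ w y (Pi.single i 1)‖₊ : ℝ≥0∞) ^ (p i)
      ∂(volume : Measure (Fin N → ℝ))) ^ (1 / p i) with hNi_def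
  -- FTC for a C¹ compactly supported function
  have ftc : ∀ (v : (Fin N → ℝ) → ℝ), ContDiff ℝ 1 v → HasCompactSupport v →
      ∀ (i : Fin N) (x : Fin N → ℝ), (‖v x‖₊ : ℝ≥0∞) ≤
        ∫⁻ s, (‖fderiv ℝ v (Function.update x i s) (Pi.single i 1)‖₊ : ℝ≥0∞) ∂volume := by
    intro v hv h2v i x
    calc (‖v x‖₊ : ℝ≥0∞)
        ≤ ∫⁻ s in Iic (x i), (‖deriv (v ∘ Function.update x i) s‖₊ : ℝ≥0∞) ∂volume := by
          apply le_trans (by simp) (HasCompactSupport.enorm_le_lintegral_Ici_deriv (f := v ∘ Function.update x i) _ _ (x i))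
          · exact hv.comp (by convert contDiff_update 1 x i)
          · exact h2v.comp_isClosedEmbedding (isClosedEmbedding_update x i)
      _ ≤ ∫⁻ s, (‖deriv (v ∘ Function.update x i) s‖₊ : ℝ≥0∞) ∂volume :=
          lintegral_mono' Measure.restrict_le_self le_rfl
      _ = ∫⁻ s, (‖fderiv ℝ v (Function.update x i s) (Pi.single i 1)‖₊ : ℝ≥0∞) ∂volume := by
          congr 1; ext s
          rw [fderiv_comp_deriv _ (hv.differentiable one_ne_zero).differentiableAt
            (hasDerivAt_update x i s).differentiableAt, deriv_update]
  -- main pointwise estimate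
  have hFTC : ∀ (i : Fin N) (x : Fin N → ℝ),
      (‖w x‖₊ : ℝ≥0∞) ^ (t i) ≤ ∫⁻ s, F i (Function.update x i s) ∂volume := by
    intro i x
    rcases (ht1 i).eq_or_lt with h1 | h1
    · simp only [hF_def, ← h1, sub_self, ENNReal.rpow_zero, ENNReal.ofReal_one, one_mul,
        mul_one, ENNReal.rpow_one]
      exact ftc w hw h2w i x
    · set v : (Fin N → ℝ) → ℝ := fun y => ‖w y‖ ^ (t i) with hv_def
      have hv : ContDiff ℝ 1 v := hw.norm_rpow h1
      have h2v : HasCompactSupport v := (h2w.norm).rpow_const (ht0 i).ne'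
      have hreal : ∀ y, ‖fderiv ℝ v y (Pi.single i 1)‖ ≤
          t i * ‖w y‖ ^ (t i - 1) * ‖fderiv ℝ w y (Pi.single i 1)‖ := by
        intro y
        rw [hv_def, (hw.differentiable one_ne_zero).fderiv_norm_rpow h1]
        simp only [ContinuousLinearMap.coe_smul', Pi.smul_apply,
          ContinuousLinearMap.coe_comp', Function.comp_apply, innerSL_apply_apply, smul_eq_mul,
          RCLike.inner_apply, starRingEnd_apply, star_trivial]
        have e1 : ‖w y‖ ^ (t i - 2) * ‖w y‖ = ‖w y‖ ^ (t i - 1) := by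
          rcases eq_or_ne (w y) 0 with h0 | h0
          · rw [h0, norm_zero, mul_zero, Real.zero_rpow (by linarith : t i - 1 ≠ 0)]
          · rw [← Real.rpow_add_one (norm_ne_zero_iff.mpr h0) (t i - 2)]
            congr 1
            ring
        refine le_of_eq ?_
        rw [norm_mul, norm_mul, norm_mul, Real.norm_of_nonneg (ht0 i).le,
          Real.norm_of_nonneg (Real.rpow_nonneg (norm_nonneg _) _), ← e1]
        ring
      have hD2 : ∀ y, (‖fderiv ℝ v y (Pi.single i 1)‖₊ : ℝ≥0∞) ≤
          ENNReal.ofReal (t i) * (‖w y‖₊ : ℝ≥0∞) ^ (t i - 1) *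
            (‖fderiv ℝ w y (Pi.single i 1)‖₊ : ℝ≥0∞) := by
        intro y
        rw [← enorm_eq_nnnorm, ← ofReal_norm, ← enorm_eq_nnnorm (fderiv ℝ w y _), ← ofReal_norm (fderiv ℝ w y _),
          ← enorm_eq_nnnorm (w y), ← ofReal_norm (w y),
          ENNReal.ofReal_rpow_of_nonneg (norm_nonneg _) (by linarith : (0:ℝ) ≤ t i - 1),
          ← ENNReal.ofReal_mul (by positivity), ← ENNReal.ofReal_mul (by positivity)]
        exact ENNReal.ofReal_le_ofReal (hreal y)
      have hnn : (‖w x‖₊ : ℝ≥0∞) ^ (t i) = (‖v x‖₊ : ℝ≥0∞) := by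
        rw [← ENNReal.coe_rpow_of_nonneg _ (ht0 i).le]
        norm_cast
        rw [hv_def]
        rw [Real.nnnorm_rpow_of_nonneg (norm_nonneg _), nnnorm_norm]
      calc (‖w x‖₊ : ℝ≥0∞) ^ (t i) = (‖v x‖₊ : ℝ≥0∞) := hnn
        _ ≤ ∫⁻ s, (‖fderiv ℝ v (Function.update x i s) (Pi.single i 1)‖₊ : ℝ≥0∞) ∂volume :=
            ftc v hv h2v i x
        _ ≤ ∫⁻ s, F i (Function.update x i s) ∂volume :=
            lintegral_mono fun s => hD2 _
  -- Hölder per coordinate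
  have holder : ∀ i, (∫⁻ y, F i y ∂(volume : Measure (Fin N → ℝ))) ≤
      ENNReal.ofReal (t i) * (I ^ (1 - 1 / p i) * Ni i) := by
    intro i
    have hlin : (∫⁻ y, F i y ∂(volume : Measure (Fin N → ℝ))) = ENNReal.ofReal (t i) *
        ∫⁻ y, (‖w y‖₊ : ℝ≥0∞) ^ (t i - 1) * (‖fderiv ℝ w y (Pi.single i 1)‖₊ : ℝ≥0∞)
          ∂(volume : Measure (Fin N → ℝ)) := by
      rw [← lintegral_const_mul _ (by exact (hmw (t i - 1)).mul (hmd i) : Measurable fun y => (‖w y‖₊ : ℝ≥0∞) ^ (t i - 1) * (‖fderiv ℝ w y (Pi.single i 1)‖₊ : ℝ≥0∞))]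
      simp only [hF_def, mul_assoc]
    rw [hlin]
    gcongr
    rcases (hp i).eq_or_lt with h1 | h1
    · have hp1 : p i = 1 := h1.symm
      have hti : t i = 1 := by
        show (1:ℝ) + ps * (1 - 1 / p i) = 1
        rw [hp1]
        norm_num
      have hIpow : I ^ (1 - 1 / p i) = 1 := by rw [hp1]; norm_num
      have hNieq : Ni i = ∫⁻ y, (‖fderiv ℝ w y (Pi.single i 1)‖₊ : ℝ≥0∞)
          ∂(volume : Measure (Fin N → ℝ)) := by
        simp only [hNi_def, hp1]
        norm_num
      rw [hIpow, hNieq, one_mul, hti]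
      simp
    · have hcj : ((p i) / (p i - 1)).HolderConjugate (p i) := by
        have := (Real.HolderConjugate.conjExponent h1).symm
        rwa [Real.conjExponent] at this
      have hH := ENNReal.lintegral_mul_le_Lp_mul_Lq (volume : Measure (Fin N → ℝ)) hcj
        (hmw (t i - 1)).aemeasurable (hmd i).aemeasurable
      have hexp : (t i - 1) * (p i / (p i - 1)) = ps := by
        have hne : p i - 1 ≠ 0 := by linarith
        show ((1:ℝ) + ps * (1 - 1 / p i) - 1) * (p i / (p i - 1)) = ps
        field_simp
        ring
      have hinv : 1 / (p i / (p i - 1)) = 1 - 1 / p i := by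
        rw [one_div_div]
        field_simp
      calc ∫⁻ y, (‖w y‖₊ : ℝ≥0∞) ^ (t i - 1) * (‖fderiv ℝ w y (Pi.single i 1)‖₊ : ℝ≥0∞)
            ∂(volume : Measure (Fin N → ℝ))
          ≤ (∫⁻ y, ((‖w y‖₊ : ℝ≥0∞) ^ (t i - 1)) ^ (p i / (p i - 1))
              ∂(volume : Measure (Fin N → ℝ))) ^ (1 / (p i / (p i - 1))) *
            (∫⁻ y, (‖fderiv ℝ w y (Pi.single i 1)‖₊ : ℝ≥0∞) ^ (p i)
              ∂(volume : Measure (Fin N → ℝ))) ^ (1 / p i) := hH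
        _ = I ^ (1 - 1 / p i) * Ni i := by
            rw [hinv, hNi_def]
            congr 2
            · congr 1; ext y
              rw [← ENNReal.rpow_mul, hexp]
  -- the key estimate via Loomis–Whitney
  have key : I ≤ ∏ i, (∫⁻ y, F i y ∂(volume : Measure (Fin N → ℝ))) ^ q := by
    have hLW := loomis_whitney (fun _ : Fin N => (volume : Measure ℝ)) F hF hq0
      (by rw [Fintype.card_fin]; exact hq1) 0
    rw [← MeasureTheory.volume_pi] at hLW
    calc I = ∫⁻ y, ∏ i, ((‖w y‖₊ : ℝ≥0∞) ^ (t i)) ^ q ∂(volume : Measure (Fin N → ℝ)) := by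
          rw [hI_def]
          congr 1; ext y
          rw [← hsumt, rpow_sum_helper _ _ _ (fun i => mul_nonneg (ht0 i).le hq0)]
          refine Finset.prod_congr rfl fun i _ => ?_
          rw [ENNReal.rpow_mul]
      _ ≤ ∫⁻ y, ∏ i, (∫⁻ s, F i (Function.update y i s) ∂volume) ^ q
            ∂(volume : Measure (Fin N → ℝ)) :=
          lintegral_mono fun y => Finset.prod_le_prod' fun i _ =>
            ENNReal.rpow_le_rpow (hFTC i y) hq0
      _ ≤ ∏ i, (∫⁻ y, F i y ∂(volume : Measure (Fin N → ℝ))) ^ q := hLW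
  have main : I ≤ ((∏ i, ENNReal.ofReal (t i) ^ q) * ∏ i, Ni i ^ q) * I ^ b := by
    calc I ≤ ∏ i, (∫⁻ y, F i y ∂(volume : Measure (Fin N → ℝ))) ^ q := key
      _ ≤ ∏ i, (ENNReal.ofReal (t i) * (I ^ (1 - 1 / p i) * Ni i)) ^ q :=
          Finset.prod_le_prod' fun i _ => ENNReal.rpow_le_rpow (holder i) hq0
      _ = ((∏ i, ENNReal.ofReal (t i) ^ q) * ∏ i, Ni i ^ q) * I ^ b := by
          have hsplit2 : ∀ i, (ENNReal.ofReal (t i) * (I ^ (1 - 1 / p i) * Ni i)) ^ q =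
              ENNReal.ofReal (t i) ^ q * (I ^ ((1 - 1 / p i) * q) * Ni i ^ q) := by
            intro i
            rw [ENNReal.mul_rpow_of_nonneg _ _ hq0, ENNReal.mul_rpow_of_nonneg _ _ hq0,
              ← ENNReal.rpow_mul]
          simp_rw [hsplit2]
          rw [Finset.prod_mul_distrib, Finset.prod_mul_distrib]
          rw [← rpow_sum_helper I _ _ (fun i => by
            have h1 : 1 / p i ≤ 1 := by rw [div_le_one (hp0 i)]; exact hp i
            exact mul_nonneg (by linarith) hq0)]
          rw [← Finset.sum_mul, ← hb_def]
          ring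
  -- identification of the norms
  have hLHS : eLpNorm u (ENNReal.ofReal ps) volume = I ^ (1 / ps) := by
    rw [eLpNorm_eq_lintegral_rpow_enorm_toReal (by simp [hps_pos] : ENNReal.ofReal ps ≠ 0)
      ENNReal.ofReal_ne_top, ENNReal.toReal_ofReal hps_pos.le]
    congr 1
    rw [hI_def]
    exact (mpE.lintegral_comp ((hu.continuous.measurable.nnnorm.coe_nnreal_ennreal).pow_const _)).symm
  have hNS : ∀ i, eLpNorm (fun x : Rn N => pd i u x) (ENNReal.ofReal (p i)) volume = Ni i := by
    intro i
    have hmeasE : Measurable fun x : Rn N => (‖pd i u x‖₊ : ℝ≥0∞) ^ (p i) := by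
      have hcont : Continuous fun x : Rn N => pd i u x := by
        have h1 : Continuous (fderiv ℝ u) := hu.continuous_fderiv (by simp)
        exact h1.clm_apply continuous_const
      exact (hcont.measurable.nnnorm.coe_nnreal_ennreal).pow_const _
    rw [eLpNorm_eq_lintegral_rpow_enorm_toReal (by simp [hp0 i] : ENNReal.ofReal (p i) ≠ 0)
      ENNReal.ofReal_ne_top, ENNReal.toReal_ofReal (hp0 i).le, hNi_def]
    congr 1
    rw [← mpE.lintegral_comp (by exact hmeasE : Measurable fun x : Rn N => ‖pd i u x‖ₑ ^ (p i))]
    congr 1; ext y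
    rw [hD y i]
    rfl
  have hIfin : I ≠ ⊤ := by
    have hmem : MemLp w (ENNReal.ofReal ps) volume :=
      hwc.memLp_of_hasCompactSupport h2w
    have hlt := hmem.eLpNorm_lt_top
    rw [eLpNorm_eq_lintegral_rpow_enorm_toReal (by simp [hps_pos] : ENNReal.ofReal ps ≠ 0)
      ENNReal.ofReal_ne_top, ENNReal.toReal_ofReal hps_pos.le] at hlt
    simp only [enorm_eq_nnnorm] at hlt
    intro htop
    rw [hI_def] at htop
    rw [htop, ENNReal.top_rpow_of_pos (one_div_pos.mpr hps_pos)] at hlt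
    exact (lt_irrefl _ hlt).elim
  -- conclusion
  rw [hLHS]
  have hC : ENNReal.ofReal (∏ i, t i ^ (1 / (N:ℝ))) = ∏ i, ENNReal.ofReal (t i) ^ (1/(N:ℝ)) := by
    rw [ENNReal.ofReal_prod_of_nonneg (fun i _ => Real.rpow_nonneg (ht0 i).le _)]
    exact Finset.prod_congr rfl fun i _ =>
      (ENNReal.ofReal_rpow_of_nonneg (ht0 i).le (by positivity : (0:ℝ) ≤ 1 / (N:ℝ))).symm
  rw [hC]
  simp_rw [hNS]
  by_cases hI0 : I = 0
  · rw [hI0, ENNReal.zero_rpow_of_pos (one_div_pos.mpr hps_pos)]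
    exact zero_le
  · have hIb0 : I ^ b ≠ 0 := (ENNReal.rpow_pos (pos_iff_ne_zero.mpr hI0) hIfin).ne'
    have hIbt : I ^ b ≠ ⊤ := ENNReal.rpow_ne_top_of_nonneg hb0 hIfin
    have step : I ^ (1 - b) ≤ (∏ i, ENNReal.ofReal (t i) ^ q) * ∏ i, Ni i ^ q := by
      rw [ENNReal.rpow_sub _ _ hI0 hIfin, ENNReal.rpow_one, ENNReal.div_le_iff hIb0 hIbt]
      exact main
    calc I ^ (1 / ps) = (I ^ (1 - b)) ^ (((N:ℝ) - 1)/(N:ℝ)) := by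
          rw [← ENNReal.rpow_mul, h1bps]
      _ ≤ ((∏ i, ENNReal.ofReal (t i) ^ q) * ∏ i, Ni i ^ q) ^ (((N:ℝ) - 1)/(N:ℝ)) :=
          ENNReal.rpow_le_rpow step (by positivity)
      _ = (∏ i, ENNReal.ofReal (t i) ^ (1/(N:ℝ))) * ∏ i, Ni i ^ (1/(N:ℝ)) := by
          have hqN : q * (((N:ℝ) - 1)/(N:ℝ)) = 1/(N:ℝ) := by
            rw [hq_def]; field_simp
          rw [ENNReal.mul_rpow_of_nonneg _ _ (by positivity),
            ← ENNReal.prod_rpow_of_nonneg (r := ((N:ℝ) - 1)/(N:ℝ)) (by positivity),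
            ← ENNReal.prod_rpow_of_nonneg (r := ((N:ℝ) - 1)/(N:ℝ)) (by positivity)]
          congr 1
          · exact Finset.prod_congr rfl fun i _ => by rw [← ENNReal.rpow_mul, hqN]
          · exact Finset.prod_congr rfl fun i _ => by rw [← ENNReal.rpow_mul, hqN]

end
end

section
/- Let N ≥ 2 and let p_1,…,p_N ≥ 1 be such that p̄ = N, where 1/p̄ = (1/N)Σ_{i=1}^N 1/p_i. Let p_0 ≥ 1. Then for every q ∈ [p_0, ∞) there exists a constant C_2 > 0, independent of u, such that ‖u‖_{L^q(ℝ^N)} ≤ C_2 (‖u‖_{L^{p_0}(ℝ^N)} + ∏_{i=1}^N ‖∂_{x_i} u‖_{L^{p_i}(ℝ^N)}^{1/N}) for every u ∈ C_c^∞(ℝ^N). -/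
set_option linter.unusedSectionVars false
set_option maxHeartbeats 1000000

open MeasureTheory Real Set Filter Topology
open scoped ENNReal NNReal BigOperators

noncomputable section

namespace AnisoBorder
open MeasureTheory Function Finset Filter Set
open scoped ENNReal NNReal Topology
open MeasureTheory Function Finset
open scoped ENNReal

variable {ι : Type*} [DecidableEq ι] {A : ι → Type*} [∀ i, MeasurableSpace (A i)]
  (μ : ∀ i, Measure (A i)) [∀ i, SigmaFinite (μ i)]

lemma lmarginal_update_indep {f : (∀ i, A i) → ℝ≥0∞} {i : ι}
    (h : ∀ x y, f (update x i y) = f x) (t : Finset ι) (x : ∀ i, A i) (y : A i) :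
    (∫⋯∫⁻_t, f ∂μ) (update x i y) = (∫⋯∫⁻_t, f ∂μ) x := by
  by_cases hit : i ∈ t
  · exact lmarginal_update_of_mem μ hit f x y
  · simp only [lmarginal]
    refine lintegral_congr fun z => ?_
    rw [show updateFinset (update x i y) t z = update (updateFinset x t z) i y from ?_, h]
    ext k
    rcases eq_or_ne k i with rfl | hk
    · simp [updateFinset, hit, update_self]
    · by_cases hk2 : k ∈ t <;> simp [updateFinset, hk2, hk, update_of_ne hk]

theorem lw_marginal [Fintype ι] {pE : ℝ} (hpE : 0 ≤ pE)
    (hcard : ((Fintype.card ι : ℝ) - 1) * pE = 1)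
    (g : ι → (∀ i, A i) → ℝ≥0∞) (hg : ∀ i, Measurable (g i))
    (hgi : ∀ i x y, g i (update x i y) = g i x)
    (s : Finset ι) :
    (∫⋯∫⁻_s, (fun x => ∏ j, (g j x) ^ pE) ∂μ)
      ≤ fun x => ∏ j, ((∫⋯∫⁻_(s.erase j), g j ∂μ) x) ^ pE := by
  classical
  have hcard1 : 1 ≤ Fintype.card ι := by
    rcases Nat.eq_zero_or_pos (Fintype.card ι) with h | h
    · rw [h] at hcard; push_cast at hcard; nlinarith
    · exact h
  have hFmeas : Measurable (fun x => ∏ j, (g j x) ^ pE) :=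
    Finset.measurable_prod _ fun j _ => (hg j).pow_const _
  induction s using Finset.induction with
  | empty => simp
  | @insert i s his ih =>
    intro x
    rw [lmarginal_insert _ hFmeas his]
    set M : ι → (∀ i, A i) → ℝ≥0∞ := fun j => (∫⋯∫⁻_(s.erase j), g j ∂μ) with hM
    have hMmeas : ∀ j, Measurable (M j) := fun j => (hg j).lmarginal μ
    have hMi_indep : ∀ (z : ∀ i, A i) (y : A i), M i (update z i y) = M i z := by
      intro z y
      exact lmarginal_update_indep μ (fun a b => hgi i a b) _ z y
    calc ∫⁻ xᵢ, (∫⋯∫⁻_s, (fun x => ∏ j, (g j x) ^ pE) ∂μ) (update x i xᵢ) ∂μ i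
        ≤ ∫⁻ xᵢ, ∏ j, (M j (update x i xᵢ)) ^ pE ∂μ i :=
          lintegral_mono fun xᵢ => ih (update x i xᵢ)
      _ = ∫⁻ xᵢ, (M i x) ^ pE * ∏ j ∈ univ.erase i, (M j (update x i xᵢ)) ^ pE ∂μ i := by
          refine lintegral_congr fun xᵢ => ?_
          rw [← Finset.mul_prod_erase univ _ (mem_univ i), hMi_indep x xᵢ]
      _ = (M i x) ^ pE * ∫⁻ xᵢ, ∏ j ∈ univ.erase i, (M j (update x i xᵢ)) ^ pE ∂μ i := by
          rw [lintegral_const_mul]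
          exact Finset.measurable_prod _ fun j _ =>
            (((hMmeas j).comp (measurable_update x)).pow_const _)
      _ ≤ (M i x) ^ pE * ∏ j ∈ univ.erase i, (∫⁻ xᵢ, M j (update x i xᵢ) ∂μ i) ^ pE := by
          gcongr
          refine ENNReal.lintegral_prod_norm_pow_le _ (fun j _ =>
            ((hMmeas j).comp (measurable_update x)).aemeasurable) ?_ (fun j _ => hpE)
          rw [Finset.sum_const, card_erase_of_mem (mem_univ i), card_univ, nsmul_eq_mul]
          rw [← hcard]
          congr 1
          push_cast [Nat.cast_sub hcard1]
          ring
      _ = ∏ j, ((∫⋯∫⁻_((insert i s).erase j), g j ∂μ) x) ^ pE := by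
          rw [← Finset.mul_prod_erase univ
            (fun j => ((∫⋯∫⁻_((insert i s).erase j), g j ∂μ) x) ^ pE) (mem_univ i)]
          congr 1
          · show ((∫⋯∫⁻_(s.erase i), g i ∂μ) x) ^ pE = _
            rw [Finset.erase_eq_of_notMem his, Finset.erase_insert his]
          · refine Finset.prod_congr rfl fun j hj => ?_
            have hji : j ≠ i := (Finset.mem_erase.1 hj).1
            congr 1
            rw [← lmarginal_insert _ (hg j) (fun h => his (Finset.mem_of_mem_erase h))]
            congr 1
            rw [Finset.erase_insert_of_ne hji.symm]

theorem lw_lintegral [Fintype ι] {pE : ℝ} (hpE : 0 ≤ pE)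
    (hcard : ((Fintype.card ι : ℝ) - 1) * pE = 1)
    (f : ι → (∀ i, A i) → ℝ≥0∞) (hf : ∀ i, Measurable (f i)) (x₀ : ∀ i, A i) :
    ∫⁻ x, ∏ j, (∫⁻ t, f j (update x j t) ∂μ j) ^ pE ∂Measure.pi μ
      ≤ ∏ j, (∫⁻ x, f j x ∂Measure.pi μ) ^ pE := by
  classical
  set g : ι → (∀ i, A i) → ℝ≥0∞ := fun j => (∫⋯∫⁻_{j}, f j ∂μ) with hg
  have hgmeas : ∀ j, Measurable (g j) := fun j => (hf j).lmarginal μ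
  have hgi : ∀ j x y, g j (update x j y) = g j x := by
    intro j x y
    exact lmarginal_update_of_mem μ (Finset.mem_singleton_self j) _ _ _
  have h1 : ∀ x, ∏ j, (∫⁻ t, f j (update x j t) ∂μ j) ^ pE = ∏ j, (g j x) ^ pE := by
    intro x
    refine Finset.prod_congr rfl fun j _ => ?_
    show _ = ((∫⋯∫⁻_{j}, f j ∂μ) x) ^ pE
    rw [lmarginal_singleton]
  calc ∫⁻ x, ∏ j, (∫⁻ t, f j (update x j t) ∂μ j) ^ pE ∂Measure.pi μ
      = (∫⋯∫⁻_Finset.univ, (fun x => ∏ j, (g j x) ^ pE) ∂μ) x₀ := by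
        simp_rw [h1]
        exact lintegral_eq_lmarginal_univ x₀
    _ ≤ ∏ j, ((∫⋯∫⁻_(Finset.univ.erase j), g j ∂μ) x₀) ^ pE :=
        lw_marginal μ hpE hcard g hgmeas hgi Finset.univ x₀
    _ = ∏ j, (∫⁻ x, f j x ∂Measure.pi μ) ^ pE := by
        refine Finset.prod_congr rfl fun j _ => ?_
        congr 1
        rw [hg, ← lmarginal_union μ (f j) (hf j)
          (Finset.disjoint_singleton_right.2 (Finset.notMem_erase j _))]
        rw [show Finset.univ.erase j ∪ {j} = Finset.univ by
          ext k
          by_cases h : k = j <;> simp [h]]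
        rw [lmarginal_univ]

-- rpow of sum
lemma ennreal_rpow_sum {ι' : Type*} (x : ℝ≥0∞) (s : Finset ι') (a : ι' → ℝ)
    (ha : ∀ i ∈ s, 0 ≤ a i) : x ^ (∑ i ∈ s, a i) = ∏ i ∈ s, x ^ a i := by
  classical
  induction s using Finset.induction with
  | empty => simp
  | @insert i s his ih =>
    rw [Finset.sum_insert his, Finset.prod_insert his,
      ENNReal.rpow_add_of_nonneg _ _ (ha i (Finset.mem_insert_self i s))
        (Finset.sum_nonneg fun j hj => ha j (Finset.mem_insert_of_mem hj)),
      ih (fun j hj => ha j (Finset.mem_insert_of_mem hj))]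

open Filter Set
open scoped Topology ENNReal

lemma abs_absD {t : ℝ} (ht : 1 < t) (a : ℝ) :
    |t * |a| ^ (t - 2) * a| = t * |a| ^ (t - 1) := by
  rcases eq_or_ne a 0 with rfl | h
  · simp [Real.zero_rpow (show t - 1 ≠ 0 by intro hh; rw [sub_eq_zero] at hh; linarith)]
  · rw [abs_mul, abs_mul, abs_of_nonneg (le_of_lt (by linarith : (0:ℝ) < t)),
      abs_of_nonneg (Real.rpow_nonneg (abs_nonneg a) _), mul_assoc]
    congr 1
    rw [show t - 1 = (t - 2) + 1 by ring, Real.rpow_add (abs_pos.2 h), Real.rpow_one]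

lemma continuous_absD {t : ℝ} (ht : 1 < t) :
    Continuous (fun a : ℝ => t * |a| ^ (t - 2) * a) := by
  refine continuous_iff_continuousAt.2 fun a => ?_
  rcases eq_or_ne a 0 with rfl | h
  · have h0 : t * |(0:ℝ)| ^ (t - 2) * (0:ℝ) = 0 := by ring
    rw [ContinuousAt, h0]
    refine squeeze_zero_norm (a := fun a : ℝ => t * |a| ^ (t - 1))
      (fun b => by rw [Real.norm_eq_abs, abs_absD ht]) ?_
    · have hcont : Continuous (fun a : ℝ => t * |a| ^ (t - 1)) := by
        refine continuous_const.mul ?_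
        refine continuous_iff_continuousAt.2 fun b => ?_
        exact (Real.continuousAt_rpow_const _ _ (Or.inr (by linarith))).comp
          continuous_abs.continuousAt
      have := hcont.tendsto 0
      simpa [Real.zero_rpow (show t - 1 ≠ 0 by intro hh; rw [sub_eq_zero] at hh; linarith)]
        using this
  · refine ContinuousAt.mul (ContinuousAt.mul continuousAt_const ?_) continuousAt_id
    exact (Real.continuousAt_rpow_const _ _ (Or.inl (abs_ne_zero.2 h))).comp
      continuous_abs.continuousAt

open MeasureTheory Function

lemma coe_nnnorm_real (r : ℝ) : (‖r‖₊ : ℝ≥0∞) = ENNReal.ofReal |r| := by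
  exact Real.enorm_eq_ofReal_abs r

lemma coe_nnnorm_rpow (r : ℝ) {e : ℝ} (he : 0 ≤ e) :
    (‖r‖₊ : ℝ≥0∞) ^ e = ENNReal.ofReal (|r| ^ e) := by
  rw [coe_nnnorm_real, ENNReal.ofReal_rpow_of_nonneg (abs_nonneg r) he]

lemma ftc_pointwise {N : ℕ} {u : (Fin N → ℝ) → ℝ} (hu : ContDiff ℝ 1 u)
    (h2u : HasCompactSupport u) {t : ℝ} (ht : 1 < t) (i : Fin N) (x : Fin N → ℝ) :
    (‖u x‖₊ : ℝ≥0∞) ^ t ≤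
      ∫⁻ s : ℝ, ENNReal.ofReal t * (‖u (update x i s)‖₊ : ℝ≥0∞) ^ (t - 1) *
        (‖fderiv ℝ u (update x i s) (Pi.single i 1)‖₊ : ℝ≥0∞) := by
  set w : ℝ → ℝ := u ∘ update x i with hw_def
  have hw : ContDiff ℝ 1 w := hu.comp (by convert contDiff_update 1 x i)
  have h2w : HasCompactSupport w := h2u.comp_isClosedEmbedding (isClosedEmbedding_update x i)
  have hw' : ∀ s : ℝ, HasDerivAt w (fderiv ℝ u (update x i s) (Pi.single i 1)) s := by
    intro s
    exact ((hu.differentiable one_ne_zero) (update x i s)).hasFDerivAt.comp_hasDerivAt s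
      (hasDerivAt_update x i s)
  set ψ : ℝ → ℝ := fun s => |w s| ^ t with hψ_def
  have hψd : ∀ s : ℝ, HasDerivAt ψ
      ((t * |w s| ^ (t - 2) * w s) * fderiv ℝ u (update x i s) (Pi.single i 1)) s := by
    intro s
    exact (hasDerivAt_abs_rpow (w s) ht).comp s (hw' s)
  have hψderiv : deriv ψ = fun s =>
      (t * |w s| ^ (t - 2) * w s) * fderiv ℝ u (update x i s) (Pi.single i 1) :=
    funext fun s => (hψd s).deriv
  have hψcd : ContDiff ℝ 1 ψ := by
    rw [contDiff_one_iff_deriv]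
    refine ⟨fun s => (hψd s).differentiableAt, ?_⟩
    rw [hψderiv]
    have hwderiv : Continuous (deriv w) := (contDiff_one_iff_deriv.1 hw).2
    have : (fun s => fderiv ℝ u (update x i s) (Pi.single i 1)) = deriv w :=
      funext fun s => ((hw' s).deriv).symm
    exact ((continuous_absD ht).comp hw.continuous).mul
      (show Continuous fun s => (fderiv ℝ u (update x i s)) (Pi.single i 1) from
        this ▸ hwderiv)
  have hψc : HasCompactSupport ψ := by
    apply h2w.comp_left (g := fun a : ℝ => |a| ^ t)
    simp [Real.zero_rpow (show t ≠ 0 by linarith)]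
  calc (‖u x‖₊ : ℝ≥0∞) ^ t = (‖ψ (x i)‖₊ : ℝ≥0∞) := by
        rw [coe_nnnorm_rpow _ (le_of_lt (by linarith : (0:ℝ) < t)), coe_nnnorm_real]
        congr 1
        rw [abs_of_nonneg (Real.rpow_nonneg (abs_nonneg _) t)]
        simp only [ψ, w, Function.comp_apply, update_eq_self]
    _ ≤ ∫⁻ s in Set.Iic (x i), (‖deriv ψ s‖₊ : ℝ≥0∞) :=
        HasCompactSupport.enorm_le_lintegral_Ici_deriv hψcd hψc (x i)
    _ ≤ ∫⁻ s : ℝ, (‖deriv ψ s‖₊ : ℝ≥0∞) := lintegral_mono' Measure.restrict_le_self le_rfl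
    _ = ∫⁻ s : ℝ, ENNReal.ofReal t * (‖u (update x i s)‖₊ : ℝ≥0∞) ^ (t - 1) *
        (‖fderiv ℝ u (update x i s) (Pi.single i 1)‖₊ : ℝ≥0∞) := by
        refine lintegral_congr fun s => ?_
        simp only [w, Function.comp_apply] at hψderiv ⊢
        rw [hψderiv, coe_nnnorm_real, abs_mul, abs_absD ht,
          ENNReal.ofReal_mul (by positivity), ENNReal.ofReal_mul (by linarith),
          coe_nnnorm_rpow _ (show (0:ℝ) ≤ t - 1 by linarith), coe_nnnorm_real]

variable {N : ℕ}

def Jr (u : (Fin N → ℝ) → ℝ) (r : ℝ) : ℝ≥0∞ :=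
  ∫⁻ x : Fin N → ℝ, (‖u x‖₊ : ℝ≥0∞) ^ r

def Dp (u : (Fin N → ℝ) → ℝ) (i : Fin N) (pi : ℝ) : ℝ≥0∞ :=
  (∫⁻ x : Fin N → ℝ, (‖fderiv ℝ u x (Pi.single i 1)‖₊ : ℝ≥0∞) ^ pi) ^ (1 / pi)

lemma key_step (hN : 2 ≤ N) {p : Fin N → ℝ} (hp : ∀ i, 1 < p i)
    (hsum : ∑ i, 1 / p i = 1) {u : (Fin N → ℝ) → ℝ}
    (hu : ContDiff ℝ 1 u) (h2u : HasCompactSupport u) {r : ℝ} (hr : 0 < r) :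
    Jr u (r + N / ((N : ℝ) - 1)) ≤
      (∏ i, ENNReal.ofReal (1 + r * (1 - 1 / p i)) ^ (1 / ((N : ℝ) - 1))) * Jr u r *
        ∏ i, (Dp u i (p i)) ^ (1 / ((N : ℝ) - 1)) := by
  classical
  have hN1 : (1 : ℝ) ≤ (N : ℝ) - 1 := by
    have : (2 : ℝ) ≤ N := by exact_mod_cast hN
    linarith
  set pE : ℝ := 1 / ((N : ℝ) - 1) with hpE_def
  have hpE : 0 ≤ pE := by positivity
  have hcardpE : ((N : ℝ) - 1) * pE = 1 := by
    rw [hpE_def]; field_simp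
  set c : Fin N → ℝ := fun i => 1 - 1 / p i with hc_def
  have hc : ∀ i, 0 < c i := by
    intro i
    have h1 : 0 < p i := lt_trans one_pos (hp i)
    have : 1 / p i < 1 := by rw [div_lt_one h1]; exact hp i
    simp only [hc_def]; linarith
  have hc1 : ∀ i, c i < 1 := by
    intro i
    have h1 : 0 < p i := lt_trans one_pos (hp i)
    have : 0 < 1 / p i := by positivity
    simp only [hc_def]; linarith
  have hcsum : ∑ i, c i = (N : ℝ) - 1 := by
    simp only [hc_def]
    rw [Finset.sum_sub_distrib, hsum, Finset.sum_const, card_univ, Fintype.card_fin,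
      nsmul_eq_mul, mul_one]
  set t : Fin N → ℝ := fun i => 1 + r * c i with ht_def
  have ht : ∀ i, 1 < t i := fun i => by
    simp only [ht_def]; nlinarith [hc i]
  have ht0 : ∀ i, 0 ≤ t i - 1 := fun i => by linarith [ht i]
  have hum : Measurable u := hu.continuous.measurable
  have hEm : Measurable (fun x : Fin N → ℝ => (‖u x‖₊ : ℝ≥0∞)) :=
    hum.nnnorm.coe_nnreal_ennreal
  have hdm : ∀ i, Measurable (fun x : Fin N → ℝ =>
      (‖fderiv ℝ u x (Pi.single i 1)‖₊ : ℝ≥0∞)) := by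
    intro i
    have h1 : Continuous (fderiv ℝ u) := hu.continuous_fderiv one_ne_zero
    have : Continuous (fun x : Fin N → ℝ => fderiv ℝ u x (Pi.single i 1)) := by fun_prop
    exact this.measurable.nnnorm.coe_nnreal_ennreal
  set f : Fin N → (Fin N → ℝ) → ℝ≥0∞ := fun i y =>
    ENNReal.ofReal (t i) * (‖u y‖₊ : ℝ≥0∞) ^ (t i - 1) *
      (‖fderiv ℝ u y (Pi.single i 1)‖₊ : ℝ≥0∞) with hf_def
  have hfm : ∀ i, Measurable (f i) := by
    intro i
    exact ((measurable_const.mul ((hEm).pow_const _)).mul (hdm i))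
  have hvol : (volume : Measure (Fin N → ℝ)) = Measure.pi fun _ => (volume : Measure ℝ) :=
    rfl
  calc Jr u (r + N / ((N : ℝ) - 1))
      = ∫⁻ x : Fin N → ℝ, ∏ i, ((‖u x‖₊ : ℝ≥0∞) ^ t i) ^ pE := by
        refine lintegral_congr fun x => ?_
        rw [show r + (N : ℝ) / ((N : ℝ) - 1) = ∑ i, t i * pE by
          rw [← Finset.sum_mul]
          have hts : ∑ i, t i = (N : ℝ) + r * ((N : ℝ) - 1) := by
            simp only [ht_def]
            rw [Finset.sum_add_distrib, ← Finset.mul_sum, hcsum, Finset.sum_const, card_univ,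
              Fintype.card_fin, nsmul_eq_mul, mul_one]
          rw [hts, add_mul, hpE_def]
          have hne : (N : ℝ) - 1 ≠ 0 := by linarith
          field_simp
          ring]
        rw [ennreal_rpow_sum _ Finset.univ _ (fun i _ => mul_nonneg (by linarith [ht i]) hpE)]
        refine Finset.prod_congr rfl fun i _ => ?_
        rw [← ENNReal.rpow_mul]
    _ ≤ ∫⁻ x : Fin N → ℝ, ∏ i, (∫⁻ s : ℝ, f i (update x i s)) ^ pE := by
        refine lintegral_mono fun x => Finset.prod_le_prod' fun i _ => ?_
        refine ENNReal.rpow_le_rpow ?_ hpE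
        simpa only [hf_def] using ftc_pointwise hu h2u (ht i) i x
    _ ≤ ∏ i, (∫⁻ y : Fin N → ℝ, f i y) ^ pE := by
        rw [hvol]
        refine lw_lintegral (fun _ => (volume : Measure ℝ)) hpE ?_ f hfm (fun _ => 0)
        rw [Fintype.card_fin]; exact hcardpE
    _ ≤ ∏ i, (ENNReal.ofReal (t i) * (Jr u r) ^ (c i) * Dp u i (p i)) ^ pE := by
        refine Finset.prod_le_prod' fun i _ => ?_
        refine ENNReal.rpow_le_rpow ?_ hpE
        have hpi0 : 0 < p i := lt_trans one_pos (hp i)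
        have hconj : (1 / c i).HolderConjugate (p i) := by
          rw [Real.holderConjugate_iff]; constructor
          · rw [lt_div_iff₀ (hc i), one_mul]; exact hc1 i
          · rw [one_div, inv_inv]
            simp only [hc_def]
            rw [inv_eq_one_div]
            ring
        calc ∫⁻ y, f i y
            = ENNReal.ofReal (t i) *
              ∫⁻ y, ((‖u y‖₊ : ℝ≥0∞) ^ (t i - 1)) *
                (‖fderiv ℝ u y (Pi.single i 1)‖₊ : ℝ≥0∞) := by
              rw [← lintegral_const_mul (f := fun y => ((‖u y‖₊ : ℝ≥0∞) ^ (t i - 1)) * (‖fderiv ℝ u y (Pi.single i 1)‖₊ : ℝ≥0∞)) _ (((hEm).pow_const _).mul (hdm i))]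
              refine lintegral_congr fun y => ?_
              simp only [hf_def]; ring
          _ ≤ ENNReal.ofReal (t i) *
              ((∫⁻ y, ((‖u y‖₊ : ℝ≥0∞) ^ (t i - 1)) ^ (1 / c i)) ^ (1 / (1 / c i)) *
                (∫⁻ y, (‖fderiv ℝ u y (Pi.single i 1)‖₊ : ℝ≥0∞) ^ (p i)) ^ (1 / p i)) := by
              gcongr
              exact ENNReal.lintegral_mul_le_Lp_mul_Lq volume hconj
                (((hEm).pow_const _)).aemeasurable (hdm i).aemeasurable
          _ = ENNReal.ofReal (t i) * (Jr u r) ^ (c i) * Dp u i (p i) := by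
              rw [mul_assoc]
              congr 2
              · rw [one_div_one_div]
                congr 1
                unfold Jr
                refine lintegral_congr fun y => ?_
                rw [← ENNReal.rpow_mul]
                congr 1
                have : c i ≠ 0 := ne_of_gt (hc i)
                simp only [ht_def]
                field_simp
                ring
    _ = (∏ i, ENNReal.ofReal (1 + r * (1 - 1 / p i)) ^ (1 / ((N : ℝ) - 1))) * Jr u r *
        ∏ i, (Dp u i (p i)) ^ (1 / ((N : ℝ) - 1)) := by
        calc ∏ i, (ENNReal.ofReal (t i) * (Jr u r) ^ c i * Dp u i (p i)) ^ pE
            = (∏ i, ENNReal.ofReal (t i) ^ pE) * (∏ i, (Jr u r) ^ (c i * pE)) *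
              (∏ i, (Dp u i (p i)) ^ pE) := by
              rw [← Finset.prod_mul_distrib, ← Finset.prod_mul_distrib]
              refine Finset.prod_congr rfl fun i _ => ?_
              rw [ENNReal.mul_rpow_of_nonneg _ _ hpE, ENNReal.mul_rpow_of_nonneg _ _ hpE,
                ← ENNReal.rpow_mul]
          _ = _ := by
              rw [← ennreal_rpow_sum (Jr u r) Finset.univ _
                (fun i _ => mul_nonneg (le_of_lt (hc i)) hpE)]
              rw [show ∑ i, c i * pE = 1 by rw [← Finset.sum_mul, hcsum, hcardpE],
                ENNReal.rpow_one]

lemma jr_base {u : (Fin N → ℝ) → ℝ} {p₀ : ℝ} (hp₀ : 0 < p₀) (M : ℝ≥0∞)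
    (hM : (Jr u p₀) ^ (1 / p₀) ≤ M) : Jr u p₀ ≤ M ^ p₀ := by
  have : Jr u p₀ = ((Jr u p₀) ^ (1 / p₀)) ^ p₀ := by
    rw [← ENNReal.rpow_mul, one_div, inv_mul_cancel₀ (ne_of_gt hp₀), ENNReal.rpow_one]
  rw [this]
  exact ENNReal.rpow_le_rpow hM (le_of_lt hp₀)

lemma iter_step (hN : 2 ≤ N) {p : Fin N → ℝ} (hp : ∀ i, 1 < p i)
    (hsum : ∑ i, 1 / p i = 1) {p₀ : ℝ} (hp₀ : 1 ≤ p₀) (k : ℕ) :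
    ∃ C : ℝ≥0∞, C ≠ ∞ ∧ ∀ u : (Fin N → ℝ) → ℝ, ContDiff ℝ 1 u → HasCompactSupport u →
      Jr u (p₀ + k * ((N : ℝ) / ((N : ℝ) - 1))) ≤
        C * ((Jr u p₀) ^ (1 / p₀) + ∏ i, Dp u i (p i) ^ (1 / (N : ℝ))) ^
          (p₀ + k * ((N : ℝ) / ((N : ℝ) - 1))) := by
  have hN1 : (1 : ℝ) ≤ (N : ℝ) - 1 := by
    have : (2 : ℝ) ≤ N := by exact_mod_cast hN
    linarith
  have hN0 : (0 : ℝ) < N := by linarith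
  have hN' : (0 : ℝ) < (N : ℝ) / ((N : ℝ) - 1) := by positivity
  have hpE : (0:ℝ) ≤ 1 / ((N : ℝ) - 1) := by positivity
  induction k with
  | zero =>
    refine ⟨1, ENNReal.one_ne_top, fun u hu h2u => ?_⟩
    simp only [Nat.cast_zero, zero_mul, add_zero, one_mul]
    exact jr_base (lt_of_lt_of_le one_pos hp₀) _ le_self_add
  | succ k ih =>
    obtain ⟨C, hC, hCle⟩ := ih
    set r : ℝ := p₀ + k * ((N : ℝ) / ((N : ℝ) - 1)) with hr_def
    have hr : 0 < r := by
      have : (0:ℝ) ≤ k * ((N : ℝ) / ((N : ℝ) - 1)) := by positivity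
      simp only [hr_def]; linarith
    set Ct : ℝ≥0∞ := ∏ i, ENNReal.ofReal (1 + r * (1 - 1 / p i)) ^ (1 / ((N : ℝ) - 1)) with hCt_def
    have hCtne : Ct ≠ ∞ := by
      refine (ENNReal.prod_lt_top fun i _ => ?_).ne
      exact (ENNReal.rpow_lt_top_of_nonneg hpE ENNReal.ofReal_ne_top)
    refine ⟨Ct * C, ENNReal.mul_ne_top hCtne hC, fun u hu h2u => ?_⟩
    set M : ℝ≥0∞ := (Jr u p₀) ^ (1 / p₀) + ∏ i, Dp u i (p i) ^ (1 / (N : ℝ)) with hM_def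
    have hstep := key_step hN hp hsum hu h2u hr
    have hprod : (∏ i, (Dp u i (p i)) ^ (1 / ((N : ℝ) - 1))) ≤
        M ^ ((N : ℝ) / ((N : ℝ) - 1)) := by
      have h1 : ∀ i : Fin N, (Dp u i (p i)) ^ (1 / ((N : ℝ) - 1)) =
          ((Dp u i (p i)) ^ (1 / (N : ℝ))) ^ ((N : ℝ) / ((N : ℝ) - 1)) := by
        intro i
        rw [← ENNReal.rpow_mul]
        congr 1
        field_simp
      simp_rw [h1]
      rw [ENNReal.prod_rpow_of_nonneg (le_of_lt hN')]
      exact ENNReal.rpow_le_rpow le_add_self (le_of_lt hN')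
    calc Jr u (p₀ + (k + 1 : ℕ) * ((N : ℝ) / ((N : ℝ) - 1)))
        = Jr u (r + (N : ℝ) / ((N : ℝ) - 1)) := by
          congr 1
          simp only [hr_def]
          push_cast
          ring
      _ ≤ Ct * Jr u r * ∏ i, (Dp u i (p i)) ^ (1 / ((N : ℝ) - 1)) := hstep
      _ ≤ Ct * (C * M ^ r) * M ^ ((N : ℝ) / ((N : ℝ) - 1)) := by
          exact mul_le_mul' (mul_le_mul' le_rfl (hCle u hu h2u)) hprod
      _ = (Ct * C) * M ^ (p₀ + (k + 1 : ℕ) * ((N : ℝ) / ((N : ℝ) - 1))) := by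
          rw [show p₀ + (k + 1 : ℕ) * ((N : ℝ) / ((N : ℝ) - 1)) =
            r + (N : ℝ) / ((N : ℝ) - 1) by simp only [hr_def]; push_cast; ring]
          rw [ENNReal.rpow_add_of_nonneg _ _ (le_of_lt hr) (le_of_lt hN')]
          ring

lemma interp {u : (Fin N → ℝ) → ℝ} (hu : Measurable u) {a b q : ℝ}
    (ha : 0 < a) (hab : a < b) (haq : a ≤ q) (hqb : q ≤ b) :
    Jr u q ≤ (Jr u a) ^ ((b - q) / (b - a)) * (Jr u b) ^ ((q - a) / (b - a)) := by
  have hba : (0:ℝ) < b - a := by linarith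
  set θ : ℝ := (b - q) / (b - a) with hθ_def
  have hθ0 : 0 ≤ θ := div_nonneg (by linarith) (le_of_lt hba)
  have hθ1 : θ ≤ 1 := by rw [hθ_def, div_le_one hba]; linarith
  have hEm : Measurable (fun x : Fin N → ℝ => (‖u x‖₊ : ℝ≥0∞)) :=
    hu.nnnorm.coe_nnreal_ennreal
  rcases eq_or_lt_of_le hθ0 with h0 | hθpos
  · have hqb' : q = b := by
      have := h0.symm
      rw [hθ_def, div_eq_zero_iff] at this
      rcases this with h | h
      · linarith
      · linarith
    rw [← h0, ENNReal.rpow_zero, one_mul, hqb', show (b - a) / (b - a) = 1 from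
      div_self (ne_of_gt hba), ENNReal.rpow_one]
  rcases eq_or_lt_of_le hθ1 with h1 | hθlt
  · have hqa : q = a := by
      rw [hθ_def, div_eq_one_iff_eq (ne_of_gt hba)] at h1
      linarith
    rw [hθ_def, hqa, show (a - a) / (b - a) = 0 by rw [sub_self, zero_div],
      ENNReal.rpow_zero, mul_one, show (b - a) / (b - a) = 1 from div_self (ne_of_gt hba),
      ENNReal.rpow_one]
  · have hconj : (1 / θ).HolderConjugate (1 / (1 - θ)) := by
      rw [Real.holderConjugate_iff]; constructor
      · rw [lt_div_iff₀ hθpos, one_mul]; exact hθlt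
      · simp only [one_div, inv_inv]; ring
    have hid : θ * a + (1 - θ) * b = q := by
      rw [hθ_def]; field_simp; ring
    have h1θ : 1 - θ = (q - a) / (b - a) := by
      rw [hθ_def]; field_simp
      ring
    calc Jr u q = ∫⁻ x, ((fun x => ((‖u x‖₊ : ℝ≥0∞)) ^ (θ * a)) *
          (fun x => ((‖u x‖₊ : ℝ≥0∞)) ^ ((1 - θ) * b))) x := by
          refine lintegral_congr fun x => ?_
          simp only [Pi.mul_apply]
          rw [← ENNReal.rpow_add_of_nonneg _ _ (mul_nonneg hθ0 (le_of_lt ha))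
            (mul_nonneg (by linarith) (by linarith : (0:ℝ) ≤ b)), hid]
      _ ≤ (∫⁻ x, ((‖u x‖₊ : ℝ≥0∞) ^ (θ * a)) ^ (1 / θ)) ^ (1 / (1 / θ)) *
          (∫⁻ x, ((‖u x‖₊ : ℝ≥0∞) ^ ((1 - θ) * b)) ^ (1 / (1 - θ))) ^ (1 / (1 / (1 - θ))) :=
          ENNReal.lintegral_mul_le_Lp_mul_Lq volume hconj
            (hEm.pow_const _).aemeasurable (hEm.pow_const _).aemeasurable
      _ = (Jr u a) ^ θ * (Jr u b) ^ ((q - a) / (b - a)) := by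
          rw [one_div_one_div, one_div_one_div, ← h1θ]
          congr 2
          · refine lintegral_congr fun x => ?_
            rw [← ENNReal.rpow_mul]
            congr 1
            field_simp
          · refine lintegral_congr fun x => ?_
            rw [← ENNReal.rpow_mul]
            congr 1
            have : 1 - θ ≠ 0 := by linarith
            field_simp

theorem main_pi (hN : 2 ≤ N) {p : Fin N → ℝ} (hp : ∀ i, 1 < p i)
    (hsum : ∑ i, 1 / p i = 1) {p₀ : ℝ} (hp₀ : 1 ≤ p₀) {q : ℝ} (hq : p₀ ≤ q) :
    ∃ C : ℝ≥0∞, C ≠ ∞ ∧ ∀ u : (Fin N → ℝ) → ℝ, ContDiff ℝ 1 u → HasCompactSupport u →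
      (Jr u q) ^ (1 / q) ≤ C * ((Jr u p₀) ^ (1 / p₀) + ∏ i, Dp u i (p i) ^ (1 / (N : ℝ))) := by
  have hN1 : (1 : ℝ) ≤ (N : ℝ) - 1 := by
    have : (2 : ℝ) ≤ N := by exact_mod_cast hN
    linarith
  have hN' : (0 : ℝ) < (N : ℝ) / ((N : ℝ) - 1) := by positivity
  have hp₀0 : (0:ℝ) < p₀ := lt_of_lt_of_le one_pos hp₀
  have hq0 : (0:ℝ) < q := lt_of_lt_of_le hp₀0 hq
  obtain ⟨k, hk⟩ := exists_nat_ge ((q - p₀) / ((N : ℝ) / ((N : ℝ) - 1)))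
  set Q : ℝ := p₀ + k * ((N : ℝ) / ((N : ℝ) - 1)) with hQ_def
  have hqQ : q ≤ Q := by
    rw [div_le_iff₀ hN'] at hk
    simp only [hQ_def]; linarith
  obtain ⟨C, hCne, hC⟩ := iter_step hN hp hsum hp₀ k
  rcases eq_or_lt_of_le hq with rfl | hqlt
  · -- q = p₀
    refine ⟨1, ENNReal.one_ne_top, fun u hu h2u => ?_⟩
    rw [one_mul]
    exact le_self_add
  · have hp₀Q : p₀ < Q := lt_of_lt_of_le hqlt hqQ
    set θ : ℝ := (Q - q) / (Q - p₀) with hθ_def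
    have hθ0 : 0 ≤ θ := div_nonneg (by linarith) (by linarith)
    have h1θ0 : 0 ≤ (q - p₀) / (Q - p₀) := div_nonneg (by linarith) (by linarith)
    refine ⟨C ^ ((q - p₀) / (Q - p₀) / q), ?_, fun u hu h2u => ?_⟩
    · exact (ENNReal.rpow_lt_top_of_nonneg (div_nonneg h1θ0 (le_of_lt hq0))
        (hCne)).ne
    set M : ℝ≥0∞ := (Jr u p₀) ^ (1 / p₀) + ∏ i, Dp u i (p i) ^ (1 / (N : ℝ)) with hM_def
    have hJp₀ : Jr u p₀ ≤ M ^ p₀ := jr_base hp₀0 _ le_self_add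
    have hJQ : Jr u Q ≤ C * M ^ Q := hC u hu h2u
    have hinterp := interp (N := N) hu.continuous.measurable hp₀0 hp₀Q (le_of_lt hqlt) hqQ
    calc (Jr u q) ^ (1 / q)
        ≤ ((Jr u p₀) ^ θ * (Jr u Q) ^ ((q - p₀) / (Q - p₀))) ^ (1 / q) :=
          ENNReal.rpow_le_rpow hinterp (by positivity)
      _ ≤ ((M ^ p₀) ^ θ * ((C * M ^ Q)) ^ ((q - p₀) / (Q - p₀))) ^ (1 / q) :=
          ENNReal.rpow_le_rpow (mul_le_mul' (ENNReal.rpow_le_rpow hJp₀ hθ0)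
            (ENNReal.rpow_le_rpow hJQ h1θ0)) (by positivity)
      _ = (C ^ ((q - p₀) / (Q - p₀)) * M ^ q) ^ (1 / q) := by
          congr 1
          rw [ENNReal.mul_rpow_of_nonneg C (M ^ Q) h1θ0]
          rw [← ENNReal.rpow_mul M p₀ θ, ← ENNReal.rpow_mul M Q _]
          rw [← mul_assoc, mul_comm (M ^ (p₀ * θ)) _, mul_assoc]
          congr 1
          rw [← ENNReal.rpow_add_of_nonneg _ _ (mul_nonneg (le_of_lt hp₀0) hθ0)
            (mul_nonneg (by linarith) h1θ0)]
          congr 1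
          have hd : Q - p₀ ≠ 0 := sub_ne_zero.2 (ne_of_gt hp₀Q)
          rw [hθ_def, ← mul_div_assoc, ← mul_div_assoc, ← add_div, div_eq_iff hd]
          ring
      _ = C ^ ((q - p₀) / (Q - p₀) / q) * M := by
          rw [ENNReal.mul_rpow_of_nonneg _ _ (by positivity : (0:ℝ) ≤ 1 / q),
            ← ENNReal.rpow_mul, ← ENNReal.rpow_mul, mul_one_div, mul_one_div,
            div_self (ne_of_gt hq0), ENNReal.rpow_one]

end AnisoBorder

open AnisoBorder

/-- **Borderline anisotropic Sobolev inequality** (case `p̄ = N`):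
for every `q ∈ [p₀, ∞)`,
`‖u‖_{L^q} ≤ C₂ (‖u‖_{L^{p₀}} + ∏ ‖∂ᵢ u‖_{L^{pᵢ}}^{1/N})`. -/
theorem anisotropic_sobolev_borderline
    {N : ℕ} (hN : 2 ≤ N)
    (p : Fin N → ℝ) (hp : ∀ i, 1 ≤ p i)
    (pbar : ℝ) (hpbar : 1 / pbar = (1 / (N : ℝ)) * ∑ i, 1 / p i)
    (hpbarN : pbar = N)
    (p₀ : ℝ) (hp₀ : 1 ≤ p₀) :
    ∀ q : ℝ, p₀ ≤ q →
      ∃ C₂ : ℝ, 0 < C₂ ∧ ∀ u : Rn N → ℝ,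
        ContDiff ℝ (⊤ : ℕ∞) u → HasCompactSupport u →
        eLpNorm u (ENNReal.ofReal q) volume ≤
          ENNReal.ofReal C₂ *
            (eLpNorm u (ENNReal.ofReal p₀) volume +
              ∏ i, (eLpNorm (fun x : Rn N => pd i u x) (ENNReal.ofReal (p i)) volume) ^
                (1 / (N : ℝ))) := by
  intro q hq
  classical
  have hN0 : (0:ℝ) < N := by
    have : (2:ℝ) ≤ N := by exact_mod_cast hN
    linarith
  have hsum : ∑ i, 1 / p i = 1 := by
    rw [hpbarN] at hpbar
    have hNne : (N:ℝ) ≠ 0 := ne_of_gt hN0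
    field_simp at hpbar
    linarith
  have hppos : ∀ i, 0 < p i := fun i => lt_of_lt_of_le one_pos (hp i)
  have hp1 : ∀ i, 1 < p i := by
    intro i
    have hlt : 1 / p i < 1 := by
      have hne : (Finset.univ.erase i).Nonempty := by
        rw [← Finset.card_pos, Finset.card_erase_of_mem (Finset.mem_univ i), Finset.card_univ,
          Fintype.card_fin]
        omega
      have hpos : 0 < ∑ j ∈ Finset.univ.erase i, 1 / p j :=
        Finset.sum_pos (fun j _ => by have := hppos j; positivity) hne
      have hdecomp : ∑ j ∈ Finset.univ.erase i, 1 / p j + 1 / p i = 1 := by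
        rw [Finset.sum_erase_add _ _ (Finset.mem_univ i)]
        exact hsum
      linarith
    rw [div_lt_one (hppos i)] at hlt
    exact hlt
  have hp₀0 : (0:ℝ) < p₀ := lt_of_lt_of_le one_pos hp₀
  have hq0 : (0:ℝ) < q := lt_of_lt_of_le hp₀0 hq
  obtain ⟨C, hCne, hC⟩ := AnisoBorder.main_pi (N := N) hN hp1 hsum hp₀ hq
  refine ⟨C.toReal + 1, by positivity, fun u hu h2u => ?_⟩
  set L := PiLp.continuousLinearEquiv 2 ℝ (fun _ : Fin N => ℝ) with hL_def
  set u' : (Fin N → ℝ) → ℝ := u ∘ L.symm with hu'_def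
  have hu'c : ContDiff ℝ 1 u' := (hu.of_le (by simp)).comp L.symm.contDiff
  have h2u' : HasCompactSupport u' := h2u.comp_homeomorph L.symm.toHomeomorph
  have hmp := EuclideanSpace.volume_preserving_symm_measurableEquiv_toLp (Fin N)
  have hemb := (MeasurableEquiv.toLp 2 (Fin N → ℝ)).symm.measurableEmbedding
  have htrans : ∀ G : (Fin N → ℝ) → ℝ≥0∞,
      ∫⁻ y : Fin N → ℝ, G y = ∫⁻ x : Rn N, G (L x) := by
    intro G
    exact (hmp.lintegral_comp_emb hemb G).symm
  have hfder : ∀ (y : Fin N → ℝ) (i : Fin N),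
      fderiv ℝ u' y (Pi.single i 1) = pd i u (L.symm y) := by
    intro y i
    have h1 : fderiv ℝ u' y = (fderiv ℝ u (L.symm y)).comp (fderiv ℝ (⇑L.symm) y) :=
      fderiv_comp y (((hu.of_le (by simp) : ContDiff ℝ 1 u).differentiable one_ne_zero) _) L.symm.differentiableAt
    rw [h1, L.symm.fderiv]
    rfl
  have hLnorm : ∀ s : ℝ, 0 < s →
      eLpNorm u (ENNReal.ofReal s) volume = (Jr u' s) ^ (1 / s) := by
    intro s hs
    rw [eLpNorm_eq_lintegral_rpow_enorm_toReal
      (by simp only [ne_eq, ENNReal.ofReal_eq_zero, not_le]; linarith) ENNReal.ofReal_ne_top,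
      ENNReal.toReal_ofReal hs.le]
    congr 1
    unfold Jr
    rw [htrans (fun y => (‖u' y‖₊ : ℝ≥0∞) ^ s)]
    refine lintegral_congr fun x => ?_
    rw [hu'_def]
    simp only [Function.comp_apply]
    rw [L.symm_apply_apply]
    rw [enorm_eq_nnnorm]
  have hDnorm : ∀ i : Fin N,
      eLpNorm (fun x : Rn N => pd i u x) (ENNReal.ofReal (p i)) volume = Dp u' i (p i) := by
    intro i
    rw [eLpNorm_eq_lintegral_rpow_enorm_toReal
      (by simp only [ne_eq, ENNReal.ofReal_eq_zero, not_le]; linarith [hppos i])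
      ENNReal.ofReal_ne_top, ENNReal.toReal_ofReal (hppos i).le]
    unfold Dp
    congr 1
    rw [htrans (fun y => (‖fderiv ℝ u' y (Pi.single i 1)‖₊ : ℝ≥0∞) ^ p i)]
    refine lintegral_congr fun x => ?_
    rw [hfder (L x) i, L.symm_apply_apply]
    rw [enorm_eq_nnnorm]
  rw [hLnorm q hq0, hLnorm p₀ hp₀0]
  calc (Jr u' q) ^ (1 / q)
      ≤ C * ((Jr u' p₀) ^ (1 / p₀) + ∏ i, Dp u' i (p i) ^ (1 / (N : ℝ))) :=
        hC u' hu'c h2u'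
    _ ≤ ENNReal.ofReal (C.toReal + 1) *
        ((Jr u' p₀) ^ (1 / p₀) + ∏ i, Dp u' i (p i) ^ (1 / (N : ℝ))) := by
        refine mul_le_mul_left ?_ _
        calc C = ENNReal.ofReal C.toReal := (ENNReal.ofReal_toReal hCne).symm
          _ ≤ ENNReal.ofReal (C.toReal + 1) := ENNReal.ofReal_le_ofReal (by linarith)
    _ = ENNReal.ofReal (C.toReal + 1) *
        ((Jr u' p₀) ^ (1 / p₀) +
          ∏ i, (eLpNorm (fun x : Rn N => pd i u x) (ENNReal.ofReal (p i)) volume) ^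
            (1 / (N : ℝ))) := by
        congr 2
        exact Finset.prod_congr rfl fun i _ => by rw [hDnorm i]

end
end

section
/- Let N ≥ 1, R > 0, α ≥ 0, β ≥ 0 and θ_i > 0 for i = 1,…,N, and let Ω = {x ∈ ℝ^N : Σ_{i=1}^N |x_i|^{θ_i} < R}. Fix j ∈ {1,…,N}. If Σ_{i=1}^N 1/θ_i + β/θ_j > α, then the function x ↦ (Σ_{i=1}^N |x_i|^{θ_i})^{−α} |x_j|^{β} belongs to L^1(Ω). -/
open MeasureTheory Real Set Filter Topology
open scoped ENNReal NNReal BigOperators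

noncomputable section

/-!
Each `|xᵢ|^{θᵢ}` is at most `∑ₖ |xₖ|^{θₖ}`, so splitting `-α = ∑ qᵢ` with all `qᵢ ≤ 0` bounds the
integrand by the product `∏ᵢ |xᵢ|^{qᵢθᵢ + β δᵢⱼ}`. On the box `|xᵢ| < R^{1/θᵢ}` containing `Ω`
this is a product of one-dimensional powers, integrable once every exponent exceeds `-1`. With
`S = ∑ 1/θₖ + β/θⱼ` and `qᵢ = -α (1 + β δᵢⱼ) / (θᵢ S)`, the `i`-th exponent is
`(1 + β δᵢⱼ)(1 - α/S) - 1 > -1`.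
-/

lemma rpow_sum_le_prod_rpow_of_nonpos {ι : Type*} (s : Finset ι) {y q : ι → ℝ}
    (hy : ∀ i ∈ s, 0 < y i) (hq : ∀ i ∈ s, q i ≤ 0) :
    (∑ i ∈ s, y i) ^ (∑ i ∈ s, q i) ≤ ∏ i ∈ s, y i ^ q i := by
  rcases s.eq_empty_or_nonempty with rfl | hs
  · simp
  have hsum : 0 < ∑ i ∈ s, y i := Finset.sum_pos hy hs
  rw [rpow_sum_of_pos hsum]
  exact Finset.prod_le_prod (fun i _ => by positivity) fun i hi =>
    rpow_le_rpow_of_nonpos (hy i hi) (Finset.single_le_sum (fun k hk => (hy k hk).le) hi) (hq i hi)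

lemma intervalIntegrable_abs_rpow {p : ℝ} (hp : -1 < p) (a b : ℝ) :
    IntervalIntegrable (fun t : ℝ => |t| ^ p) volume a b := by
  have from_zero : ∀ c, IntervalIntegrable (fun t : ℝ => |t| ^ p) volume 0 c := by
    have of_nonneg : ∀ c, 0 ≤ c → IntervalIntegrable (fun t : ℝ => |t| ^ p) volume 0 c :=
      fun c hc => (intervalIntegral.intervalIntegrable_rpow' hp).congr fun t ht => by
        rw [uIoc_of_le hc] at ht
        rw [abs_of_pos ht.1]
    intro c
    rcases le_total 0 c with hc | hc
    · exact of_nonneg c hc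
    · simpa using (IntervalIntegrable.iff_comp_neg (by simp)).1 (of_nonneg (-c) (by linarith))
  exact (from_zero a).symm.trans (from_zero b)

lemma integrableOn_abs_rpow_Ioo {p : ℝ} (hp : -1 < p) (r : ℝ) :
    IntegrableOn (fun t : ℝ => |t| ^ p) (Ioo (-r) r) :=
  (intervalIntegrable_iff.1 (intervalIntegrable_abs_rpow hp (-r) r)).mono_set
    (Ioo_subset_Ioc_self.trans Ioc_subset_uIoc)

section

variable {ι : Type*} [Fintype ι]

lemma integrableOn_prod_abs_rpow_pi_Ioo {p : ι → ℝ} (hp : ∀ i, -1 < p i) (r : ι → ℝ) :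
    IntegrableOn (fun x : ι → ℝ => ∏ i, |x i| ^ p i) (univ.pi fun i => Ioo (-r i) (r i)) := by
  rw [IntegrableOn, volume_pi, Measure.restrict_pi_pi]
  exact Integrable.fintype_prod fun i => integrableOn_abs_rpow_Ioo (hp i) (r i)

lemma setOf_sum_abs_rpow_lt_subset_pi_Ioo {θ : ι → ℝ} (hθ : ∀ i, 0 < θ i) (R : ℝ) :
    {x : ι → ℝ | ∑ i, |x i| ^ θ i < R} ⊆ univ.pi fun i => Ioo (-R ^ (θ i)⁻¹) (R ^ (θ i)⁻¹) := by
  intro x hx i _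
  have hi : |x i| ^ θ i < R :=
    (Finset.single_le_sum (f := fun k => |x k| ^ θ k) (fun k _ => by positivity)
      (Finset.mem_univ i)).trans_lt hx
  rw [mem_Ioo, ← abs_lt, ← rpow_rpow_inv (abs_nonneg (x i)) (hθ i).ne']
  exact rpow_lt_rpow (by positivity) hi (inv_pos.2 (hθ i))

end

section

variable {ι : Type*} [Fintype ι] [DecidableEq ι]

lemma sum_abs_rpow_rpow_mul_abs_rpow_le_prod {θ q : ι → ℝ} (hq : ∀ i, q i ≤ 0) (j : ι) (β : ℝ)
    {x : ι → ℝ} (hx : ∀ i, x i ≠ 0) :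
    (∑ i, |x i| ^ θ i) ^ (∑ i, q i) * |x j| ^ β ≤
      ∏ i, |x i| ^ (q i * θ i + if i = j then β else 0) := by
  have hpos : ∀ i, 0 < |x i| := fun i => abs_pos.2 (hx i)
  have hsingle : ∏ i, |x i| ^ (if i = j then β else 0) = |x j| ^ β := by
    rw [Fintype.prod_eq_single j fun i hi => by simp [hi]]
    simp
  calc (∑ i, |x i| ^ θ i) ^ (∑ i, q i) * |x j| ^ β
      ≤ (∏ i, (|x i| ^ θ i) ^ q i) * |x j| ^ β := by
        gcongr
        exact rpow_sum_le_prod_rpow_of_nonpos _ (fun i _ => rpow_pos_of_pos (hpos i) _)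
          fun i _ => hq i
    _ = ∏ i, |x i| ^ (q i * θ i + if i = j then β else 0) := by
        simp_rw [rpow_add (hpos _), Finset.prod_mul_distrib, hsingle, ← rpow_mul (abs_nonneg _),
          mul_comm]

lemma integrableOn_sum_abs_rpow_rpow_mul_abs_rpow {θ q : ι → ℝ} (hθ : ∀ i, 0 < θ i)
    (hq : ∀ i, q i ≤ 0) (j : ι) {β : ℝ} (hp : ∀ i, -1 < q i * θ i + if i = j then β else 0)
    (R : ℝ) :
    IntegrableOn (fun x : ι → ℝ => (∑ i, |x i| ^ θ i) ^ (∑ i, q i) * |x j| ^ β)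
      {x | ∑ i, |x i| ^ θ i < R} := by
  have hae : ∀ᵐ x : ι → ℝ, ∀ i, x i ≠ 0 := ae_all_iff.2 fun i => Measure.ae_eval_ne _ i 0
  refine ((integrableOn_prod_abs_rpow_pi_Ioo hp _).mono_set
    (setOf_sum_abs_rpow_lt_subset_pi_Ioo hθ R)).mono'
    (by fun_prop : Measurable _).aestronglyMeasurable ?_
  filter_upwards [ae_restrict_of_ae hae] with x hx
  rw [norm_of_nonneg (by positivity)]
  exact sum_abs_rpow_rpow_mul_abs_rpow_le_prod hq j β hx

lemma exists_nonpos_sum_eq_neg_of_lt_sum_inv {θ : ι → ℝ} (hθ : ∀ i, 0 < θ i) {α β : ℝ}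
    (hα : 0 ≤ α) (hβ : 0 ≤ β) (j : ι) (h : α < ∑ i, 1 / θ i + β / θ j) :
    ∃ q : ι → ℝ, (∀ i, q i ≤ 0) ∧ ∑ i, q i = -α ∧
      ∀ i, -1 < q i * θ i + if i = j then β else 0 := by
  set S := ∑ i, 1 / θ i + β / θ j
  have hS : 0 < S := hα.trans_lt h
  set c : ι → ℝ := fun i => 1 + if i = j then β else 0
  have hc : ∀ i, 1 ≤ c i := fun i => le_add_of_nonneg_right (by split_ifs <;> simp [hβ])
  have hcS : ∑ i, c i / θ i = S := by
    simp only [c, S, add_div, Finset.sum_add_distrib, ite_div, zero_div, Finset.sum_ite_eq',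
      Finset.mem_univ, if_true]
  refine ⟨fun i => -α * (c i / θ i) / S, fun i => ?_, ?_, fun i => ?_⟩
  · exact div_nonpos_of_nonpos_of_nonneg (mul_nonpos_of_nonpos_of_nonneg (neg_nonpos.2 hα)
      (div_nonneg (zero_le_one.trans (hc i)) (hθ i).le)) hS.le
  · rw [← Finset.sum_div, ← Finset.mul_sum, hcS, mul_div_assoc, div_self hS.ne', mul_one]
  · have hcoord :
        -α * (c i / θ i) / S * θ i + (if i = j then β else 0) = c i * (1 - α / S) - 1 := by
      simp only [c]
      field_simp [(hθ i).ne']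
      ring
    have hslack : 0 < 1 - α / S := sub_pos.2 ((div_lt_one hS).2 h)
    rw [hcoord]
    nlinarith [hc i]

end

theorem anisotropic_integrability_general
    {N : ℕ} (R α β : ℝ) (hα : 0 ≤ α) (hβ : 0 ≤ β)
    (θ : Fin N → ℝ) (hθ : ∀ i, 0 < θ i) (j : Fin N)
    (h : α < ∑ i, 1 / θ i + β / θ j) :
    IntegrableOn (fun x : Rn N => (∑ i, |x i| ^ θ i) ^ (-α) * |x j| ^ β)
      {x : Rn N | ∑ i, |x i| ^ θ i < R} := by
  obtain ⟨q, hq, hq_sum, hp⟩ := exists_nonpos_sum_eq_neg_of_lt_sum_inv hθ hα hβ j h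
  have hpi := integrableOn_sum_abs_rpow_rpow_mul_abs_rpow hθ hq j hp R
  rw [hq_sum] at hpi
  exact ((PiLp.volume_preserving_ofLp (Fin N)).integrableOn_comp_preimage
    (MeasurableEquiv.toLp 2 (Fin N → ℝ)).symm.measurableEmbedding).2 hpi

/-- **Lemma 7.1, integrability part**: on the anisotropic ball
`Ω = {∑ |xᵢ|^{θᵢ} < R}`, the function `(∑ |xᵢ|^{θᵢ})^{-α} |xⱼ|^β` is integrable
whenever `∑ 1/θᵢ + β/θⱼ > α`. -/
theorem anisotropic_integrability
    {N : ℕ} (hN : 1 ≤ N) (R α β : ℝ) (hR : 0 < R) (hα : 0 ≤ α) (hβ : 0 ≤ β)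
    (θ : Fin N → ℝ) (hθ : ∀ i, 0 < θ i) (j : Fin N)
    (h : α < ∑ i, 1 / θ i + β / θ j) :
    IntegrableOn (fun x : Rn N => (∑ i, |x i| ^ θ i) ^ (-α) * |x j| ^ β)
      {x : Rn N | ∑ i, |x i| ^ θ i < R} :=
  anisotropic_integrability_general R α β hα hβ θ hθ j h

end
end

section
/- Let N ≥ 1, R > 0, α ≥ 0, β ≥ 0 and θ_i > 0 for i = 1,…,N, and let Ω = {x ∈ ℝ^N : Σ_{i=1}^N |x_i|^{θ_i} < R}. Fix j ∈ {1,…,N}. If Σ_{i=1}^N 1/θ_i + β/θ_j ≤ α, then the function x ↦ (Σ_{i=1}^N |x_i|^{θ_i})^{−α} |x_j|^{β} does not belong to L^1(Ω) (its integral over Ω is infinite). -/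
open MeasureTheory Real Set Filter Topology
open scoped ENNReal NNReal BigOperators

noncomputable section

/-!
On the box where `|x_i| < u^{1/θ_i}` for all `i` and `|x_j| > (u/2)^{1/θ_j}`, the gauge
`∑ |x_i|^{θ_i}` is comparable to `u` and `|x_j|^β` to `u^{β/θ_j}`, while the volume is a constant
times `u^{∑ 1/θ_i}`. The integral over such a box is therefore at least a constant times
`u^{∑ 1/θ_i + β/θ_j - α}`, which stays bounded below as `u → 0` precisely when
`∑ 1/θ_i + β/θ_j ≤ α`. The boxes for `u = r 2^{-k}` are pairwise disjoint (the `j`-th coordinate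
separates them), so the integral is infinite.
-/

open Function in
lemma setLIntegral_eq_top_of_pairwise_disjoint {α ι : Type*} [MeasurableSpace α] [Countable ι]
    [Infinite ι] {μ : Measure α} {f : α → ℝ≥0∞} {s : ι → Set α} {t : Set α} {ε : ℝ≥0∞}
    (hs : ∀ k, MeasurableSet (s k)) (hd : Pairwise (Disjoint on s)) (hst : ∀ k, s k ⊆ t)
    (hε : ε ≠ 0) (h : ∀ k, ε ≤ ∫⁻ x in s k, f x ∂μ) : ∫⁻ x in t, f x ∂μ = ⊤ :=
  top_le_iff.mp <| calc
    ⊤ = ∑' _ : ι, ε := (ENNReal.tsum_const_eq_top_of_ne_zero hε).symm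
    _ ≤ ∑' k, ∫⁻ x in s k, f x ∂μ := ENNReal.tsum_le_tsum h
    _ = ∫⁻ x in ⋃ k, s k, f x ∂μ := (lintegral_iUnion hs hd f).symm
    _ ≤ ∫⁻ x in t, f x ∂μ := lintegral_mono_set (iUnion_subset hst)

namespace Anisotropic

variable {ι : Type*} [DecidableEq ι] (θ : ι → ℝ) (j : ι)

def dyadicBox (u : ℝ) : Set (ι → ℝ) :=
  univ.pi fun i => Ioo (if i = j then (u / 2) ^ (1 / θ i) else 0) (u ^ (1 / θ i))

variable {θ j} {u : ℝ} {x : ι → ℝ}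

lemma measurableSet_dyadicBox [Countable ι] : MeasurableSet (dyadicBox θ j u) :=
  MeasurableSet.univ_pi fun _ => measurableSet_Ioo

lemma half_rpow_lt_of_mem_dyadicBox (hx : x ∈ dyadicBox θ j u) : (u / 2) ^ (1 / θ j) < x j := by
  simpa using (hx j (mem_univ j)).1

lemma pos_of_mem_dyadicBox (hu : 0 ≤ u) (hx : x ∈ dyadicBox θ j u) (i : ι) : 0 < x i := by
  have hi := (hx i (mem_univ i)).1
  split_ifs at hi
  · exact (rpow_nonneg (by positivity) _).trans_lt hi
  · exact hi

lemma disjoint_dyadicBox (hθ : ∀ i, 0 < θ i) {u' : ℝ} (hu' : 0 ≤ u') (hu'u : u' ≤ u / 2) :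
    Disjoint (dyadicBox θ j u) (dyadicBox θ j u') := by
  refine disjoint_left.mpr fun x hx hx' => ?_
  have hlt : x j < u' ^ (1 / θ j) := by simpa using (hx' j (mem_univ j)).2
  have hle : u' ^ (1 / θ j) ≤ (u / 2) ^ (1 / θ j) :=
    rpow_le_rpow hu' hu'u (one_div_nonneg.mpr (hθ j).le)
  exact (hlt.trans_le hle).not_gt (half_rpow_lt_of_mem_dyadicBox hx)

variable [Fintype ι]

variable (θ) in
def gauge (x : ι → ℝ) : ℝ := ∑ i, |x i| ^ θ i

lemma gauge_lt_of_mem_dyadicBox (hθ : ∀ i, 0 < θ i) (hu : 0 ≤ u) (hx : x ∈ dyadicBox θ j u) :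
    gauge θ x < Fintype.card ι * u := by
  have hlt : ∀ i, |x i| ^ θ i < u := fun i => by
    have hxi := pos_of_mem_dyadicBox hu hx i
    calc |x i| ^ θ i = x i ^ θ i := by rw [abs_of_pos hxi]
      _ < (u ^ (1 / θ i)) ^ θ i := rpow_lt_rpow hxi.le (hx i (mem_univ i)).2 (hθ i)
      _ = u := by rw [← rpow_mul hu, one_div_mul_cancel (hθ i).ne', rpow_one]
  calc gauge θ x < ∑ _i : ι, u :=
        Finset.sum_lt_sum_of_nonempty ⟨j, Finset.mem_univ j⟩ fun i _ => hlt i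
    _ = Fintype.card ι * u := by simp

lemma gauge_pos_of_mem_dyadicBox (hu : 0 ≤ u) (hx : x ∈ dyadicBox θ j u) : 0 < gauge θ x :=
  (rpow_pos_of_pos (abs_pos.mpr (pos_of_mem_dyadicBox hu hx j).ne') _).trans_le <|
    Finset.single_le_sum (fun i _ => rpow_nonneg (abs_nonneg (x i)) (θ i)) (Finset.mem_univ j)

lemma volume_dyadicBox (hθ : ∀ i, 0 < θ i) (hu : 0 < u) :
    volume (dyadicBox θ j u) = ENNReal.ofReal ((1 - (1 / 2) ^ (1 / θ j)) * u ^ ∑ i, 1 / θ i) := by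
  have hlen : ∀ i, u ^ (1 / θ i) - (if i = j then (u / 2) ^ (1 / θ i) else 0) =
      u ^ (1 / θ i) * (if i = j then 1 - (1 / 2) ^ (1 / θ i) else 1) := fun i => by
    split_ifs
    · rw [div_eq_mul_one_div u, mul_rpow hu.le (by norm_num)]
      ring
    · ring
  have hnonneg : ∀ i, 0 ≤ u ^ (1 / θ i) * (if i = j then 1 - (1 / 2) ^ (1 / θ i) else 1) :=
    fun i => by
      split_ifs
      · exact mul_nonneg (rpow_nonneg hu.le _) <| sub_nonneg.mpr <|
          rpow_le_one (by norm_num) (by norm_num) (one_div_nonneg.mpr (hθ i).le)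
      · positivity
  rw [dyadicBox, volume_pi_pi]
  simp only [Real.volume_Ioo, hlen]
  rw [← ENNReal.ofReal_prod_of_nonneg fun i _ => hnonneg i, Finset.prod_mul_distrib,
    Finset.prod_ite_eq', if_pos (Finset.mem_univ j), rpow_sum_of_pos hu, mul_comm]

variable {α β : ℝ}

lemma rpow_mul_rpow_le_of_mem_dyadicBox (hθ : ∀ i, 0 < θ i) (hα : 0 ≤ α) (hβ : 0 ≤ β)
    (hu : 0 < u) (hx : x ∈ dyadicBox θ j u) :
    (Fintype.card ι * u) ^ (-α) * (u / 2) ^ (β / θ j) ≤ gauge θ x ^ (-α) * |x j| ^ β := by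
  have hgauge := gauge_pos_of_mem_dyadicBox hu.le hx
  have hxj : (u / 2) ^ (β / θ j) ≤ |x j| ^ β := by
    rw [div_eq_mul_one_div β, mul_comm, rpow_mul (by positivity)]
    exact rpow_le_rpow (by positivity)
      ((half_rpow_lt_of_mem_dyadicBox hx).le.trans (le_abs_self _)) hβ
  exact mul_le_mul (rpow_le_rpow_of_nonpos hgauge (gauge_lt_of_mem_dyadicBox hθ hu.le hx).le
    (neg_nonpos.mpr hα)) hxj (by positivity) (rpow_nonneg hgauge.le _)

lemma exists_le_setLIntegral_dyadicBox (hθ : ∀ i, 0 < θ i) (hα : 0 ≤ α) (hβ : 0 ≤ β) :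
    ∃ C > 0, ∀ u > 0, ENNReal.ofReal (C * u ^ (∑ i, 1 / θ i + β / θ j - α)) ≤
      ∫⁻ x in dyadicBox θ j u, ENNReal.ofReal (gauge θ x ^ (-α) * |x j| ^ β) := by
  have hcard : (0 : ℝ) ≤ Fintype.card ι := Nat.cast_nonneg _
  have hhalf : 0 < 1 - (1 / 2 : ℝ) ^ (1 / θ j) :=
    sub_pos.mpr (rpow_lt_one (by norm_num) (by norm_num) (one_div_pos.mpr (hθ j)))
  refine ⟨(Fintype.card ι : ℝ) ^ (-α) * (1 / 2) ^ (β / θ j) * (1 - (1 / 2) ^ (1 / θ j)),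
    mul_pos (mul_pos (rpow_pos_of_pos (Fintype.card_pos_iff.mpr ⟨j⟩ |> Nat.cast_pos.mpr) _)
      (by positivity)) hhalf, fun u hu => ?_⟩
  calc ENNReal.ofReal (_ * u ^ (∑ i, 1 / θ i + β / θ j - α))
      = ENNReal.ofReal ((Fintype.card ι * u) ^ (-α) * (u / 2) ^ (β / θ j)) *
          volume (dyadicBox θ j u) := by
        rw [volume_dyadicBox hθ hu, ← ENNReal.ofReal_mul (by positivity)]
        congr 1
        rw [rpow_sub hu, rpow_add hu, mul_rpow hcard hu.le, div_eq_mul_one_div u,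
          mul_rpow hu.le (by norm_num), rpow_neg hu.le]
        ring
    _ = ∫⁻ _ in dyadicBox θ j u, ENNReal.ofReal
          ((Fintype.card ι * u) ^ (-α) * (u / 2) ^ (β / θ j)) := (setLIntegral_const _ _).symm
    _ ≤ ∫⁻ x in dyadicBox θ j u, ENNReal.ofReal (gauge θ x ^ (-α) * |x j| ^ β) :=
        setLIntegral_mono' measurableSet_dyadicBox fun x hx =>
          ENNReal.ofReal_le_ofReal (rpow_mul_rpow_le_of_mem_dyadicBox hθ hα hβ hu hx)

theorem setLIntegral_gauge_lt_eq_top (hθ : ∀ i, 0 < θ i) {R : ℝ} (hR : 0 < R) (hα : 0 ≤ α)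
    (hβ : 0 ≤ β) (h : ∑ i, 1 / θ i + β / θ j ≤ α) :
    ∫⁻ x in {x | gauge θ x < R}, ENNReal.ofReal (gauge θ x ^ (-α) * |x j| ^ β) = ⊤ := by
  obtain ⟨C, hC, hbox⟩ := exists_le_setLIntegral_dyadicBox (j := j) hθ hα hβ
  have hcard : (0 : ℝ) < Fintype.card ι := Nat.cast_pos.mpr (Fintype.card_pos_iff.mpr ⟨j⟩)
  set r := R / Fintype.card ι
  have hr : 0 < r := by positivity
  have hu : ∀ k : ℕ, 0 < r / 2 ^ k := fun k => by positivity
  have hur : ∀ k : ℕ, r / 2 ^ k ≤ r := fun k => div_le_self hr.le (one_le_pow₀ one_le_two)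
  refine setLIntegral_eq_top_of_pairwise_disjoint (s := fun k : ℕ => dyadicBox θ j (r / 2 ^ k))
    (ε := ENNReal.ofReal (C * r ^ (∑ i, 1 / θ i + β / θ j - α)))
    (fun _ => measurableSet_dyadicBox) ?_ ?_
    (ENNReal.ofReal_pos.mpr (mul_pos hC (rpow_pos_of_pos hr _))).ne' fun k => ?_
  · refine (pairwise_disjoint_on _).mpr fun m n hmn => disjoint_dyadicBox hθ (hu n).le ?_
    calc r / 2 ^ n ≤ r / 2 ^ (m + 1) :=
          div_le_div_of_nonneg_left hr.le (by positivity) (pow_le_pow_right₀ one_le_two hmn)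
      _ = r / 2 ^ m / 2 := by rw [pow_succ]; exact (div_div r _ _).symm
  · intro k x hx
    calc gauge θ x < Fintype.card ι * (r / 2 ^ k) := gauge_lt_of_mem_dyadicBox hθ (hu k).le hx
      _ ≤ Fintype.card ι * r := by gcongr; exact hur k
      _ = R := mul_div_cancel₀ _ hcard.ne'
  · refine le_trans (ENNReal.ofReal_le_ofReal ?_) (hbox _ (hu k))
    exact mul_le_mul_of_nonneg_left (rpow_le_rpow_of_nonpos (hu k) (hur k) (by linarith)) hC.le

end Anisotropic

theorem anisotropic_non_integrability_general
    {N : ℕ} (R α β : ℝ) (hR : 0 < R) (hα : 0 ≤ α) (hβ : 0 ≤ β)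
    (θ : Fin N → ℝ) (hθ : ∀ i, 0 < θ i) (j : Fin N)
    (h : ∑ i, 1 / θ i + β / θ j ≤ α) :
    ¬ IntegrableOn (fun x : Rn N => (∑ i, |x i| ^ θ i) ^ (-α) * |x j| ^ β)
        {x : Rn N | ∑ i, |x i| ^ θ i < R} ∧
    ∫⁻ x in {x : Rn N | ∑ i, |x i| ^ θ i < R},
        ENNReal.ofReal ((∑ i, |x i| ^ θ i) ^ (-α) * |x j| ^ β) = ⊤ := by
  refine (and_iff_right_of_imp fun htop hf => hf.lintegral_lt_top.ne htop).mpr ?_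
  -- `x i` on `Rn N` is `ofLp x i`, so both set and integrand are pulled back along `ofLp`.
  exact ((PiLp.volume_preserving_ofLp (Fin N)).setLIntegral_comp_preimage_emb
    (MeasurableEquiv.toLp 2 (Fin N → ℝ)).symm.measurableEmbedding _ _).trans
    (Anisotropic.setLIntegral_gauge_lt_eq_top hθ hR hα hβ h)

/-- **Lemma 7.1, non-integrability part**: on the anisotropic ball
`Ω = {∑ |xᵢ|^{θᵢ} < R}`, the function `(∑ |xᵢ|^{θᵢ})^{-α} |xⱼ|^β` is not integrable
when `∑ 1/θᵢ + β/θⱼ ≤ α`; its (lower) integral over `Ω` is infinite. -/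
theorem anisotropic_non_integrability
    {N : ℕ} (hN : 1 ≤ N) (R α β : ℝ) (hR : 0 < R) (hα : 0 ≤ α) (hβ : 0 ≤ β)
    (θ : Fin N → ℝ) (hθ : ∀ i, 0 < θ i) (j : Fin N)
    (h : ∑ i, 1 / θ i + β / θ j ≤ α) :
    ¬ IntegrableOn (fun x : Rn N => (∑ i, |x i| ^ θ i) ^ (-α) * |x j| ^ β)
        {x : Rn N | ∑ i, |x i| ^ θ i < R} ∧
    ∫⁻ x in {x : Rn N | ∑ i, |x i| ^ θ i < R},
        ENNReal.ofReal ((∑ i, |x i| ^ θ i) ^ (-α) * |x j| ^ β) = ⊤ :=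
  anisotropic_non_integrability_general R α β hR hα hβ θ hθ j h
end
end

section
/- Let N > 2, let p_i > 1 with 1 < p̄ < N, let θ_i > 1 for i = 1,…,N, let R > 0 and γ > 0. Set Ω = {x ∈ ℝ^N : Σ_{i=1}^N |x_i|^{θ_i} < R} and u(x) = (Σ_{i=1}^N |x_i|^{θ_i})^{−γ} − (Σ_{i=1}^N R^{θ_i})^{−γ}. Then: (a) if γ < (Σ_{j=1}^N 1/θ_j)·(N−p̄)/(p̄N), then |∏_{i=1}^N ∂_{x_i} u|^{1/N} ∈ L^{p̄}(Ω); (b) for each fixed i, if γ < Σ_{j=1}^N 1/(θ_j p_i) − 1/θ_i, then ∂_{x_i} u ∈ L^{p_i}(Ω); (c) if the condition in (b) holds for every i = 1,…,N, then the condition in (a) holds and moreover u ∈ L^{p̄*}(Ω). -/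
/-!
Write `S x = ∑ |xᵢ| ^ θᵢ` and `σ = ∑ 1 / θᵢ`. The scaling `xᵢ ↦ s ^ (1 / θᵢ) xᵢ` gives
`|{S < s}| = s ^ σ |{S < 1}|`, so by the layer-cake formula `S ^ (-β)` is integrable on the
anisotropic ball as soon as `β < σ`. Since `|xᵢ| ≤ S x ^ (1 / θᵢ)`, the chain rule gives
`|∂ᵢ u| ≤ γ θᵢ S ^ (-(γ + 1 / θᵢ))` off the origin. Each part is then an inequality between
exponents: (b) is `(γ + 1 / θᵢ) pᵢ < σ`, (a) is `(γ + σ / N) p̄ < σ`, i.e. `γ p̄* < σ`, and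
averaging the conditions of (b) over `i` gives that of (a).
-/

open MeasureTheory Real Set Filter Topology
open scoped ENNReal NNReal BigOperators

noncomputable section

section AnisoGauge

variable {ι : Type*} [Fintype ι]

def anisoGauge (θ y : ι → ℝ) : ℝ := ∑ i, |y i| ^ θ i

lemma anisoGauge_nonneg (θ y : ι → ℝ) : 0 ≤ anisoGauge θ y :=
  Finset.sum_nonneg fun _ _ => rpow_nonneg (abs_nonneg _) _

lemma anisoGauge_pos {θ y : ι → ℝ} (hy : y ≠ 0) : 0 < anisoGauge θ y := by
  obtain ⟨j, hj⟩ := Function.ne_iff.1 hy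
  exact Finset.sum_pos' (fun _ _ => rpow_nonneg (abs_nonneg _) _)
    ⟨j, Finset.mem_univ _, rpow_pos_of_pos (abs_pos.2 hj) _⟩

lemma measurable_anisoGauge (θ : ι → ℝ) : Measurable (anisoGauge θ) :=
  Finset.measurable_sum _ fun i _ => (measurable_pi_apply i).abs.pow_const _

lemma measurable_anisoGauge_ofLp (θ : ι → ℝ) :
    Measurable fun x : EuclideanSpace ℝ ι => anisoGauge θ x.ofLp :=
  (measurable_anisoGauge θ).comp (WithLp.measurable_ofLp 2 _)

lemma abs_le_anisoGauge_rpow_inv {θ : ι → ℝ} (y : ι → ℝ) {i : ι} (hθ : 0 < θ i) :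
    |y i| ≤ anisoGauge θ y ^ (θ i)⁻¹ :=
  (le_rpow_inv_iff_of_pos (abs_nonneg _) (anisoGauge_nonneg θ y) hθ).2 <|
    Finset.single_le_sum (fun _ _ => rpow_nonneg (abs_nonneg _) _) (Finset.mem_univ i)

lemma anisoGauge_rpow_inv_mul {θ : ι → ℝ} (hθ : ∀ i, θ i ≠ 0) {t : ℝ} (ht : 0 < t)
    (y : ι → ℝ) : anisoGauge θ (fun i => t ^ (θ i)⁻¹ * y i) = t * anisoGauge θ y := by
  rw [anisoGauge, anisoGauge, Finset.mul_sum]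
  refine Finset.sum_congr rfl fun i _ => ?_
  rw [abs_mul, abs_of_pos (rpow_pos_of_pos ht _), mul_rpow (rpow_pos_of_pos ht _).le (abs_nonneg _),
    ← rpow_mul ht.le, inv_mul_cancel₀ (hθ i), rpow_one]

lemma volume_preimage_mul_pi {c : ι → ℝ} (hc : ∀ i, 0 < c i) (A : Set (ι → ℝ)) :
    volume ((fun (y : ι → ℝ) i => c i * y i) ⁻¹' A) = ENNReal.ofReal (∏ i, c i)⁻¹ * volume A := by
  classical
  have hprod : 0 < ∏ i, c i := Finset.prod_pos fun i _ => hc i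
  have hdet : LinearMap.det (Matrix.toLin' (Matrix.diagonal c)) = ∏ i, c i := by
    rw [LinearMap.det_toLin', Matrix.det_diagonal]
  have hmap : (fun (y : ι → ℝ) i => c i * y i) = Matrix.toLin' (Matrix.diagonal c) := by
    ext y i
    simp [Matrix.mulVec_diagonal]
  rw [hmap, Measure.addHaar_preimage_linearMap _ (hdet ▸ hprod.ne'), hdet,
    abs_of_pos (inv_pos.2 hprod)]

lemma volume_anisoGauge_lt {θ : ι → ℝ} (hθ : ∀ i, θ i ≠ 0) {s : ℝ} (hs : 0 < s) :
    volume {y : ι → ℝ | anisoGauge θ y < s}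
      = ENNReal.ofReal (s ^ ∑ i, (θ i)⁻¹) * volume {y : ι → ℝ | anisoGauge θ y < 1} := by
  have hpre : {y : ι → ℝ | anisoGauge θ y < s}
      = (fun y i => s⁻¹ ^ (θ i)⁻¹ * y i) ⁻¹' {y | anisoGauge θ y < 1} := by
    ext y
    simp only [mem_ofPred_eq, mem_preimage, anisoGauge_rpow_inv_mul hθ (inv_pos.2 hs),
      inv_mul_lt_one₀ hs]
  rw [hpre, volume_preimage_mul_pi (fun i => rpow_pos_of_pos (inv_pos.2 hs) _),
    ← rpow_sum_of_pos (inv_pos.2 hs), inv_rpow hs.le, inv_inv]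

lemma volume_anisoGauge_lt_one_lt_top {θ : ι → ℝ} (hθ : ∀ i, 0 < θ i) :
    volume {y : ι → ℝ | anisoGauge θ y < 1} < ⊤ := by
  have hsub : {y : ι → ℝ | anisoGauge θ y < 1} ⊆ univ.pi fun _ => Icc (-1) 1 := by
    intro y hy i _
    exact abs_le.1 <| (abs_le_anisoGauge_rpow_inv y (hθ i)).trans <|
      rpow_le_one (anisoGauge_nonneg θ y) hy.le (inv_nonneg.2 (hθ i).le)
  exact (measure_mono hsub).trans_lt (isCompact_univ_pi fun _ => isCompact_Icc).measure_lt_top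

lemma volume_anisoGauge_lt_lt_top {θ : ι → ℝ} (hθ : ∀ i, 0 < θ i) (s : ℝ) :
    volume {y : ι → ℝ | anisoGauge θ y < s} < ⊤ := by
  have hs : 0 < max s 1 := lt_max_of_lt_right one_pos
  refine (measure_mono fun y (hy : anisoGauge θ y < s) => ?_).trans_lt
    ((volume_anisoGauge_lt (fun i => (hθ i).ne') hs).trans_lt
      (ENNReal.mul_lt_top ENNReal.ofReal_lt_top (volume_anisoGauge_lt_one_lt_top hθ)))
  exact hy.trans_le (le_max_left s 1)

lemma volume_euclidean_anisoGauge_lt (θ : ι → ℝ) (s : ℝ) :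
    volume {x : EuclideanSpace ℝ ι | anisoGauge θ x.ofLp < s}
      = volume {y : ι → ℝ | anisoGauge θ y < s} :=
  (EuclideanSpace.volume_preserving_symm_measurableEquiv_toLp ι).measure_preimage
    (measurable_anisoGauge θ measurableSet_Iio).nullMeasurableSet

end AnisoGauge

lemma lintegral_ofReal_lt_top_of_meas_lt_le {α : Type*} [MeasurableSpace α] {μ : Measure α}
    [IsFiniteMeasure μ] {f : α → ℝ} (hf : 0 ≤ᵐ[μ] f) (hfm : AEMeasurable f μ) {c : ℝ≥0∞}
    (hc : c ≠ ⊤) {a T : ℝ} (ha : 1 < a) (hT : 0 < T)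
    (hdist : ∀ t ∈ Ioi T, μ {x | t < f x} ≤ c * ENNReal.ofReal (t ^ (-a))) :
    ∫⁻ x, ENNReal.ofReal (f x) ∂μ < ⊤ := by
  rw [lintegral_eq_lintegral_meas_lt μ hf hfm, ← Ioc_union_Ioi_eq_Ioi hT.le]
  refine (lintegral_union_le _ _ _).trans_lt (ENNReal.add_lt_top.2 ⟨?_, ?_⟩)
  · calc ∫⁻ t in Ioc 0 T, μ {x | t < f x} ≤ ∫⁻ _ in Ioc 0 T, μ univ :=
          lintegral_mono fun _ => measure_mono (subset_univ _)
      _ < ⊤ := by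
          rw [setLIntegral_const, Real.volume_Ioc]
          exact ENNReal.mul_lt_top (measure_lt_top _ _) ENNReal.ofReal_lt_top
  · calc ∫⁻ t in Ioi T, μ {x | t < f x} ≤ ∫⁻ t in Ioi T, c * ENNReal.ofReal (t ^ (-a)) :=
          setLIntegral_mono' measurableSet_Ioi hdist
      _ = c * ∫⁻ t in Ioi T, ENNReal.ofReal (t ^ (-a)) := lintegral_const_mul' _ _ hc
      _ < ⊤ := ENNReal.mul_lt_top hc.lt_top
          (integrableOn_Ioi_rpow_of_lt (neg_lt_neg ha) hT).lintegral_lt_top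

lemma abs_prod_rpow_le_of_abs_le {ι : Type*} [Fintype ι] {a C β : ι → ℝ} {s r : ℝ}
    (hs : 0 < s) (hr : 0 ≤ r) (h : ∀ i, |a i| ≤ C i * s ^ (-β i)) :
    |∏ i, a i| ^ r ≤ (∏ i, C i) ^ r * s ^ (-(r * ∑ i, β i)) := by
  have hC : ∀ i, 0 ≤ C i := fun i =>
    nonneg_of_mul_nonneg_left ((abs_nonneg _).trans (h i)) (rpow_pos_of_pos hs _)
  have hprod : |∏ i, a i| ≤ (∏ i, C i) * s ^ (-∑ i, β i) := by
    rw [Finset.abs_prod, ← Finset.sum_neg_distrib, rpow_sum_of_pos hs, ← Finset.prod_mul_distrib]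
    exact Finset.prod_le_prod (fun i _ => abs_nonneg _) fun i _ => h i
  calc |∏ i, a i| ^ r ≤ ((∏ i, C i) * s ^ (-∑ i, β i)) ^ r := rpow_le_rpow (abs_nonneg _) hprod hr
    _ = _ := by
        rw [mul_rpow (Finset.prod_nonneg fun i _ => hC i) (rpow_nonneg hs.le _), ← rpow_mul hs.le,
          neg_mul, mul_comm (∑ i, β i)]

section Integrability

variable {ι : Type*} [Fintype ι] {θ : ι → ℝ}

lemma isFiniteMeasure_restrict_anisoGauge_lt (hθ : ∀ i, 0 < θ i) (R : ℝ) :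
    IsFiniteMeasure (volume.restrict {x : EuclideanSpace ℝ ι | anisoGauge θ x.ofLp < R}) :=
  isFiniteMeasure_restrict.2 <|
    (volume_euclidean_anisoGauge_lt θ R).trans_lt (volume_anisoGauge_lt_lt_top hθ R) |>.ne

lemma lintegral_anisoGauge_rpow_neg_lt_top (hθ : ∀ i, 0 < θ i) {R β : ℝ} (hβ : 0 < β)
    (hβσ : β < ∑ i, (θ i)⁻¹) :
    ∫⁻ x in {x : EuclideanSpace ℝ ι | anisoGauge θ x.ofLp < R},
      ENNReal.ofReal (anisoGauge θ x.ofLp ^ (-β)) < ⊤ := by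
  have := isFiniteMeasure_restrict_anisoGauge_lt hθ R
  refine lintegral_ofReal_lt_top_of_meas_lt_le
    (ae_of_all _ fun x => rpow_nonneg (anisoGauge_nonneg θ _) _)
    ((measurable_anisoGauge_ofLp θ).pow_const _).aemeasurable
    (volume_anisoGauge_lt_one_lt_top hθ).ne ((one_lt_div hβ).2 hβσ) one_pos fun t ht => ?_
  have ht : 0 < t := one_pos.trans ht
  have hsub : {x : EuclideanSpace ℝ ι | t < anisoGauge θ x.ofLp ^ (-β)}
      ⊆ {x | anisoGauge θ x.ofLp < t ^ (-β)⁻¹} := by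
    intro x (hx : t < anisoGauge θ x.ofLp ^ (-β))
    have hSx : 0 < anisoGauge θ x.ofLp := by
      refine (anisoGauge_nonneg θ _).lt_of_ne fun h => ?_
      rw [← h, zero_rpow (neg_ne_zero.2 hβ.ne')] at hx
      exact ht.not_gt hx
    exact (lt_rpow_inv_iff_of_neg hSx ht (neg_lt_zero.2 hβ)).2 hx
  calc _ ≤ volume {x : EuclideanSpace ℝ ι | t < anisoGauge θ x.ofLp ^ (-β)} :=
        Measure.restrict_le_self _
    _ ≤ volume {x : EuclideanSpace ℝ ι | anisoGauge θ x.ofLp < t ^ (-β)⁻¹} := measure_mono hsub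
    _ = _ := by
        rw [volume_euclidean_anisoGauge_lt, volume_anisoGauge_lt (fun i => (hθ i).ne')
          (rpow_pos_of_pos ht _), ← rpow_mul ht.le, mul_comm, inv_neg, neg_mul, inv_mul_eq_div]

lemma memLp_anisoGauge_rpow_neg (hθ : ∀ i, 0 < θ i) {R β q : ℝ} (hβ : 0 < β) (hq : 0 < q)
    (hβσ : β * q < ∑ i, (θ i)⁻¹) :
    MemLp (fun x : EuclideanSpace ℝ ι => anisoGauge θ x.ofLp ^ (-β)) (ENNReal.ofReal q)
      (volume.restrict {x | anisoGauge θ x.ofLp < R}) := by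
  have hm := ((measurable_anisoGauge_ofLp θ).pow_const (-β)).aestronglyMeasurable
    (μ := volume.restrict {x : EuclideanSpace ℝ ι | anisoGauge θ x.ofLp < R})
  rw [← integrable_norm_rpow_iff hm (by simpa using hq) ENNReal.ofReal_ne_top,
    ENNReal.toReal_ofReal hq.le]
  have hpow : (fun x : EuclideanSpace ℝ ι => ‖anisoGauge θ x.ofLp ^ (-β)‖ ^ q)
      = fun x => anisoGauge θ x.ofLp ^ (-(β * q)) := by
    ext x
    rw [norm_of_nonneg (rpow_nonneg (anisoGauge_nonneg θ _) _),
      ← rpow_mul (anisoGauge_nonneg θ _), neg_mul]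
  rw [hpow]
  refine ⟨((measurable_anisoGauge_ofLp θ).pow_const _).aestronglyMeasurable,
    (hasFiniteIntegral_iff_ofReal (ae_of_all _ fun x => ?_)).2
      (lintegral_anisoGauge_rpow_neg_lt_top hθ (by positivity) hβσ)⟩
  exact rpow_nonneg (anisoGauge_nonneg θ _) _

lemma memLp_of_abs_le_mul_anisoGauge_rpow_neg (hθ : ∀ i, 0 < θ i) {R β q C : ℝ} (hβ : 0 < β)
    (hq : 0 < q) (hβσ : β * q < ∑ i, (θ i)⁻¹) {f : EuclideanSpace ℝ ι → ℝ}
    (hf : AEStronglyMeasurable f (volume.restrict {x | anisoGauge θ x.ofLp < R}))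
    (hbound : ∀ᵐ x ∂(volume.restrict {x | anisoGauge θ x.ofLp < R}),
      |f x| ≤ C * anisoGauge θ x.ofLp ^ (-β)) :
    MemLp f (ENNReal.ofReal q) (volume.restrict {x | anisoGauge θ x.ofLp < R}) := by
  refine (memLp_anisoGauge_rpow_neg hθ hβ hq hβσ).of_le_mul (c := C) hf ?_
  filter_upwards [hbound] with x hx
  rwa [Real.norm_eq_abs, Real.norm_eq_abs, abs_of_nonneg (rpow_nonneg (anisoGauge_nonneg θ _) _)]

lemma memLp_abs_prod_rpow_of_abs_le {κ : Type*} [Fintype κ] (hθ : ∀ i, 0 < θ i) {R q r : ℝ}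
    {C β : κ → ℝ} (hq : 0 < q) (hr : 0 ≤ r) (hβ : 0 < r * ∑ k, β k)
    (hβσ : r * (∑ k, β k) * q < ∑ i, (θ i)⁻¹) {f : κ → EuclideanSpace ℝ ι → ℝ}
    (hf : ∀ k, AEMeasurable (f k) (volume.restrict {x | anisoGauge θ x.ofLp < R}))
    (hbound : ∀ᵐ x ∂(volume.restrict {x | anisoGauge θ x.ofLp < R}),
      0 < anisoGauge θ x.ofLp ∧ ∀ k, |f k x| ≤ C k * anisoGauge θ x.ofLp ^ (-β k)) :
    MemLp (fun x => |∏ k, f k x| ^ r) (ENNReal.ofReal q)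
      (volume.restrict {x | anisoGauge θ x.ofLp < R}) := by
  refine memLp_of_abs_le_mul_anisoGauge_rpow_neg (C := (∏ k, C k) ^ r) hθ hβ hq hβσ
    ((Finset.aemeasurable_fun_prod _ fun k _ => hf k).abs.pow_const r).aestronglyMeasurable ?_
  filter_upwards [hbound] with x ⟨hS, hx⟩
  rw [abs_of_nonneg (by positivity)]
  exact abs_prod_rpow_le_of_abs_le hS hr hx

end Integrability

lemma hasFDerivAt_anisoGauge_ofLp {ι : Type*} [Fintype ι] {θ : ι → ℝ} (hθ : ∀ i, 1 < θ i)
    (x : EuclideanSpace ℝ ι) :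
    HasFDerivAt (fun x : EuclideanSpace ℝ ι => anisoGauge θ x.ofLp)
      (∑ j, (θ j * |x j| ^ (θ j - 2) * x j) • EuclideanSpace.proj (𝕜 := ℝ) j) x := by
  unfold anisoGauge
  refine HasFDerivAt.fun_sum fun j _ => ?_
  exact (hasDerivAt_abs_rpow (x j) (hθ j)).comp_hasFDerivAt x
    (EuclideanSpace.proj (𝕜 := ℝ) j).hasFDerivAt

lemma pd_anisoGauge_rpow_sub_const {N : ℕ} {θ : Fin N → ℝ} (hθ : ∀ i, 1 < θ i) (γ c : ℝ)
    {x : Rn N} (hx : x ≠ 0) (i : Fin N) :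
    pd i (fun x => anisoGauge θ x.ofLp ^ (-γ) - c) x
      = -γ * anisoGauge θ x.ofLp ^ (-γ - 1) * (θ i * |x i| ^ (θ i - 2) * x i) := by
  have hS : 0 < anisoGauge θ x.ofLp := anisoGauge_pos (by simpa using hx)
  have hφ : HasDerivAt (fun s : ℝ => s ^ (-γ)) (-γ * anisoGauge θ x.ofLp ^ (-γ - 1))
      (anisoGauge θ x.ofLp) := by
    simpa using hasDerivAt_rpow_const (p := -γ) (Or.inl hS.ne')
  have hu := (hφ.comp_hasFDerivAt x (hasFDerivAt_anisoGauge_ofLp hθ x)).sub_const c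
  rw [pd, HasFDerivAt.fderiv (f := fun x : Rn N => anisoGauge θ x.ofLp ^ (-γ) - c) hu]
  simp [mul_assoc]

lemma abs_pd_anisoGauge_rpow_sub_const_le {N : ℕ} {θ : Fin N → ℝ} (hθ : ∀ i, 1 < θ i)
    (γ c : ℝ) {x : Rn N} (hx : x ≠ 0) (i : Fin N) :
    |pd i (fun x => anisoGauge θ x.ofLp ^ (-γ) - c) x|
      ≤ |γ| * θ i * anisoGauge θ x.ofLp ^ (-(γ + (θ i)⁻¹)) := by
  have hS : 0 < anisoGauge θ x.ofLp := anisoGauge_pos (by simpa using hx)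
  have hθi : 0 < θ i := one_pos.trans (hθ i)
  have hxi : |x i| ^ (θ i - 1) ≤ anisoGauge θ x.ofLp ^ ((θ i)⁻¹ * (θ i - 1)) := by
    rw [rpow_mul hS.le]
    exact rpow_le_rpow (abs_nonneg _) (abs_le_anisoGauge_rpow_inv _ hθi) (by linarith [hθ i])
  have hpow : |x i| ^ (θ i - 2) * |x i| = |x i| ^ (θ i - 1) := by
    rw [← rpow_add_one' (abs_nonneg _) (by linarith [hθ i])]
    ring_nf
  calc |pd i (fun x => anisoGauge θ x.ofLp ^ (-γ) - c) x|
      = |γ| * θ i * (anisoGauge θ x.ofLp ^ (-γ - 1) * (|x i| ^ (θ i - 2) * |x i|)) := by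
        rw [pd_anisoGauge_rpow_sub_const hθ γ c hx i]
        simp only [abs_mul, abs_neg, abs_of_pos hθi, abs_of_pos (rpow_pos_of_pos hS _),
          abs_of_nonneg (rpow_nonneg (abs_nonneg (x i)) _)]
        ring
    _ ≤ |γ| * θ i *
          (anisoGauge θ x.ofLp ^ (-γ - 1) * anisoGauge θ x.ofLp ^ ((θ i)⁻¹ * (θ i - 1))) := by
        rw [hpow]
        gcongr
    _ = |γ| * θ i * anisoGauge θ x.ofLp ^ (-(γ + (θ i)⁻¹)) := by
        rw [← rpow_add hS]
        congr 2
        field_simp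
        ring

lemma add_div_mul_lt_of_lt_mul_sub_div {γ σ n q : ℝ} (hn : 0 < n) (hq : 0 < q)
    (h : γ < σ * (n - q) / (q * n)) : (γ + σ / n) * q < σ := by
  rw [lt_div_iff₀ (by positivity)] at h
  have : (γ + σ / n) * q = (γ * (q * n) + σ * q) / n := by field_simp
  rw [this, div_lt_iff₀ hn]
  linarith

lemma mul_div_sub_lt_of_lt_mul_sub_div {γ σ n q : ℝ} (hq : 0 < q) (hqn : q < n)
    (h : γ < σ * (n - q) / (q * n)) : γ * (n * q / (n - q)) < σ := by
  rw [lt_div_iff₀ (mul_pos hq (hq.trans hqn))] at h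
  rw [mul_div_assoc', div_lt_iff₀ (sub_pos.2 hqn)]
  nlinarith

lemma add_inv_mul_lt_of_lt_sum_inv_sub {ι : Type*} [Fintype ι] {θ : ι → ℝ} {γ q : ℝ} (hq : 0 < q)
    {i : ι} (h : γ < ∑ j, (θ j * q)⁻¹ - (θ i)⁻¹) : (γ + (θ i)⁻¹) * q < ∑ j, (θ j)⁻¹ := by
  simp only [mul_inv, ← Finset.sum_mul] at h
  rw [← lt_div_iff₀ hq, div_eq_mul_inv]
  linarith

lemma lt_mul_sub_div_of_forall_lt_sum_inv_sub {n : ℕ} {p θ : Fin n → ℝ} {γ q : ℝ}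
    (hn : 0 < n) (hq : 0 < q) (hpq : q⁻¹ = (n : ℝ)⁻¹ * ∑ i, (p i)⁻¹)
    (h : ∀ i, γ < ∑ j, (θ j * p i)⁻¹ - (θ i)⁻¹) :
    γ < (∑ j, (θ j)⁻¹) * (n - q) / (q * n) := by
  have : Nonempty (Fin n) := ⟨⟨0, hn⟩⟩
  have hn' : (0 : ℝ) < n := Nat.cast_pos.2 hn
  have hsum := Finset.sum_lt_sum_of_nonempty Finset.univ_nonempty fun i _ => h i
  have hp : ∑ i, (p i)⁻¹ = n * q⁻¹ := by rw [hpq, mul_inv_cancel_left₀ hn'.ne']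
  simp only [Finset.sum_const, Finset.card_univ, Fintype.card_fin, nsmul_eq_mul,
    Finset.sum_sub_distrib, mul_inv, ← Finset.sum_mul, ← Finset.mul_sum, hp] at hsum
  generalize ∑ j, (θ j)⁻¹ = σ at hsum ⊢
  rw [lt_div_iff₀ (by positivity)]
  have := mul_lt_mul_of_pos_right hsum hq
  field_simp at this
  linarith

theorem anisotropic_example_general
    {N : ℕ} (hN : 2 < N)
    (p : Fin N → ℝ) (hp : ∀ i, 1 < p i)
    (pbar : ℝ) (hpbar : 1 / pbar = (1 / (N : ℝ)) * ∑ i, 1 / p i)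
    (hpbar1 : 1 < pbar) (hpbarN : pbar < N)
    (θ : Fin N → ℝ) (hθ : ∀ i, 1 < θ i) (R γ : ℝ) (hγ : 0 < γ)
    (Ω : Set (Rn N)) (hΩ : Ω = {x : Rn N | ∑ i, |x i| ^ θ i < R})
    (u : Rn N → ℝ)
    (hu : ∀ x : Rn N, u x = (∑ i, |x i| ^ θ i) ^ (-γ) - (∑ i, R ^ θ i) ^ (-γ)) :
    -- (a)
    ((γ < (∑ j, 1 / θ j) * ((N : ℝ) - pbar) / (pbar * N)) →
      MemLp (fun x : Rn N => |∏ i, pd i u x| ^ (1 / (N : ℝ)))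
        (ENNReal.ofReal pbar) (volume.restrict Ω)) ∧
    -- (b)
    (∀ i, γ < ∑ j, 1 / (θ j * p i) - 1 / θ i →
      MemLp (fun x : Rn N => pd i u x) (ENNReal.ofReal (p i)) (volume.restrict Ω)) ∧
    -- (c)
    ((∀ i, γ < ∑ j, 1 / (θ j * p i) - 1 / θ i) →
      (γ < (∑ j, 1 / θ j) * ((N : ℝ) - pbar) / (pbar * N)) ∧
      MemLp u (ENNReal.ofReal ((N : ℝ) * pbar / ((N : ℝ) - pbar)))
        (volume.restrict Ω)) := by
  subst hΩ
  generalize (∑ i, R ^ θ i) ^ (-γ) = c at hu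
  obtain rfl : u = fun x => anisoGauge θ x.ofLp ^ (-γ) - c := funext hu
  simp only [one_div] at hpbar ⊢
  have hθ0 : ∀ i, 0 < θ i := fun i => one_pos.trans (hθ i)
  have hpbar0 : 0 < pbar := one_pos.trans hpbar1
  have hN0 : (0 : ℝ) < N := hpbar0.trans hpbarN
  have hx0 : ∀ᵐ x ∂volume.restrict {x : Rn N | ∑ i, |x i| ^ θ i < R}, x ≠ 0 :=
    have : Nonempty (Fin N) := ⟨⟨0, by omega⟩⟩
    Measure.ae_ne _ 0
  have hpd := hx0.mono fun x hx =>
    And.intro (anisoGauge_pos (θ := θ) (y := x.ofLp) (by simpa using hx))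
      fun i => abs_pd_anisoGauge_rpow_sub_const_le hθ γ c hx i
  have hpd_meas : ∀ i, Measurable (pd i fun x => anisoGauge θ x.ofLp ^ (-γ) - c) :=
    fun i => measurable_fderiv_apply_const ℝ _ _
  refine ⟨fun ha => ?_, fun i hb => ?_, fun hb => ?_⟩
  · have hβ : (N : ℝ)⁻¹ * ∑ i, (γ + (θ i)⁻¹) = γ + (∑ i, (θ i)⁻¹) / N := by
      rw [Finset.sum_add_distrib, Finset.sum_const, Finset.card_univ, Fintype.card_fin,
        nsmul_eq_mul]
      field_simp
    have hσ : 0 ≤ ∑ i, (θ i)⁻¹ := Finset.sum_nonneg fun i _ => (inv_pos.2 (hθ0 i)).le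
    exact memLp_abs_prod_rpow_of_abs_le hθ0 hpbar0 (inv_nonneg.2 hN0.le) (hβ ▸ by positivity)
      (hβ ▸ add_div_mul_lt_of_lt_mul_sub_div hN0 hpbar0 ha) (fun i => (hpd_meas i).aemeasurable) hpd
  · have hpi : 0 < p i := one_pos.trans (hp i)
    exact memLp_of_abs_le_mul_anisoGauge_rpow_neg hθ0 (add_pos hγ (inv_pos.2 (hθ0 i))) hpi
      (add_inv_mul_lt_of_lt_sum_inv_sub hpi hb) (hpd_meas i).aestronglyMeasurable
      (hpd.mono fun x hx => hx.2 i)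
  · have ha := lt_mul_sub_div_of_forall_lt_sum_inv_sub (by omega) hpbar0 hpbar hb
    have := isFiniteMeasure_restrict_anisoGauge_lt hθ0 R
    exact ⟨ha, (memLp_anisoGauge_rpow_neg hθ0 hγ (by positivity)
      (mul_div_sub_lt_of_lt_mul_sub_div hpbar0 hpbarN ha)).sub (memLp_const _)⟩

/-- **Example 4.1**: integrability properties of
`u(x) = (∑ |xᵢ|^{θᵢ})^{-γ} - (∑ R^{θᵢ})^{-γ}` on the anisotropic ball. -/
theorem anisotropic_example
    {N : ℕ} (hN : 2 < N)
    (p : Fin N → ℝ) (hp : ∀ i, 1 < p i)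
    (pbar : ℝ) (hpbar : 1 / pbar = (1 / (N : ℝ)) * ∑ i, 1 / p i)
    (hpbar1 : 1 < pbar) (hpbarN : pbar < N)
    (θ : Fin N → ℝ) (hθ : ∀ i, 1 < θ i) (R γ : ℝ) (hR : 0 < R) (hγ : 0 < γ)
    (Ω : Set (Rn N)) (hΩ : Ω = {x : Rn N | ∑ i, |x i| ^ θ i < R})
    (u : Rn N → ℝ)
    (hu : ∀ x : Rn N, u x = (∑ i, |x i| ^ θ i) ^ (-γ) - (∑ i, R ^ θ i) ^ (-γ)) :
    -- (a)
    ((γ < (∑ j, 1 / θ j) * ((N : ℝ) - pbar) / (pbar * N)) →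
      MemLp (fun x : Rn N => |∏ i, pd i u x| ^ (1 / (N : ℝ)))
        (ENNReal.ofReal pbar) (volume.restrict Ω)) ∧
    -- (b)
    (∀ i, γ < ∑ j, 1 / (θ j * p i) - 1 / θ i →
      MemLp (fun x : Rn N => pd i u x) (ENNReal.ofReal (p i)) (volume.restrict Ω)) ∧
    -- (c)
    ((∀ i, γ < ∑ j, 1 / (θ j * p i) - 1 / θ i) →
      (γ < (∑ j, 1 / θ j) * ((N : ℝ) - pbar) / (pbar * N)) ∧
      MemLp u (ENNReal.ofReal ((N : ℝ) * pbar / ((N : ℝ) - pbar)))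
        (volume.restrict Ω)) :=
  anisotropic_example_general hN p hp pbar hpbar hpbar1 hpbarN θ hθ R γ hγ Ω hΩ u hu

end
end
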